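/- arXiv:2405.09606 — 11 statements merged into one kernel-verified Lean document; each statement's English description precedes it below -/
import Mathlib

section
/- Let p be a prime and let R be a perfect 𝔽_p-algebra. Let A = ℤ[R] be the monoid algebra of the multiplicative monoid (R,·) over ℤ, let ε : A → R be the augmentation ring homomorphism with ε([r]) = r for all r ∈ R, and let I = ker ε. Then there is a ring isomorphism φ from the I-adic completion of A (the inverse limit of the rings A/Iⁿ over n) to the ring W(R) of p-typical Witt vectors of R such that for every r ∈ R, φ sends the class of the basis element [r] to the Teichmüller lift τ(r) ∈ W(R). -/
set_option linter.unusedSectionVars false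
set_option maxHeartbeats 1000000
set_option synthInstance.maxHeartbeats 400000

/-- The augmentation ring homomorphism `ℤ[R] → R` from the monoid algebra of the
multiplicative monoid `(R, ·)`, sending the basis element `[r]` to `r`. -/
noncomputable def monoidAlgebraAugmentation (R : Type*) [CommRing R] :
    MonoidAlgebra ℤ R →+* R :=
  ((MonoidAlgebra.lift ℤ R R) (MonoidHom.id R)).toRingHom

open WittVector

section WittSide

variable {p : ℕ} [hp : Fact p.Prime] {R : Type*} [CommRing R] [CharP R p] [PerfectRing R p]

lemma versch_inj : Function.Injective (verschiebung : WittVector p R → WittVector p R) := by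
  intro x y h
  ext n
  have := congrArg (fun z : WittVector p R => z.coeff (n + 1)) h
  simpa [verschiebung_coeff_succ] using this

lemma p_mul_inj : Function.Injective (fun x : WittVector p R => (p : WittVector p R) * x) := by
  intro x y h
  simp only [mul_comm] at h
  rw [← verschiebung_frobenius x, ← verschiebung_frobenius y] at h
  exact (frobenius_bijective p R).injective (versch_inj h)

lemma p_pow_mul_inj (n : ℕ) {x y : WittVector p R}
    (h : (p : WittVector p R) ^ n * x = (p : WittVector p R) ^ n * y) : x = y := by
  induction n with
  | zero => simpa using h
  | succ n ih =>
    apply ih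
    apply p_mul_inj
    show (p : WittVector p R) * ((p : WittVector p R) ^ n * x)
        = (p : WittVector p R) * ((p : WittVector p R) ^ n * y)
    rw [pow_succ] at h
    linear_combination h

lemma coeff_p_pow_mul (n : ℕ) (y : WittVector p R) {i : ℕ} (h : i < n) :
    ((p : WittVector p R) ^ n * y).coeff i = 0 := by
  induction n generalizing y i with
  | zero => omega
  | succ n ih =>
    have key : (p : WittVector p R) ^ (n + 1) * y
        = verschiebung (frobenius ((p : WittVector p R) ^ n * y)) := by
      rw [verschiebung_frobenius]; ring
    rw [key]
    rcases i with _ | i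
    · exact verschiebung_coeff_zero _
    · rw [verschiebung_coeff_succ]
      have hi : i < n := by omega
      have : frobenius ((p : WittVector p R) ^ n * y)
          = (p : WittVector p R) ^ n * frobenius y := by
        simp [map_mul, map_pow, map_natCast]
      rw [this]
      exact ih _ hi

lemma exists_eq_p_pow_mul (n : ℕ) (x : WittVector p R) (h : ∀ i < n, x.coeff i = 0) :
    ∃ y, x = (p : WittVector p R) ^ n * y := by
  induction n generalizing x with
  | zero => exact ⟨x, by simp⟩
  | succ n ih =>
    set w : WittVector p R := WittVector.mk p (fun i => x.coeff (i + 1)) with hw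
    have hxw : x = verschiebung w := by
      ext i
      rcases i with _ | i
      · rw [verschiebung_coeff_zero]; exact h 0 (by omega)
      · rw [verschiebung_coeff_succ, hw, WittVector.coeff_mk]
    set u : WittVector p R := (frobeniusEquiv p R).symm w with hu
    have hwu : w = frobenius u := ((frobeniusEquiv p R).apply_symm_apply w).symm
    have hxu : x = u * p := by rw [hxw, hwu, verschiebung_frobenius]
    have hcu : ∀ i < n, u.coeff i = 0 := by
      intro i hi
      have : w.coeff i = 0 := by
        rw [hw, WittVector.coeff_mk]
        exact h (i + 1) (by omega)
      rw [hu, frobeniusEquiv_symm_apply, map_coeff, this, map_zero]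
    obtain ⟨y, hy⟩ := ih u hcu
    exact ⟨y, by rw [hxu, hy]; ring⟩

lemma truncate_eq_zero_iff (n : ℕ) (x : WittVector p R) :
    WittVector.truncate n x = 0 ↔ ∃ y, x = (p : WittVector p R) ^ n * y := by
  constructor
  · intro h
    apply exists_eq_p_pow_mul
    intro i hi
    exact (WittVector.mem_ker_truncate n x).mp h i hi
  · rintro ⟨y, rfl⟩
    rw [← RingHom.mem_ker, WittVector.mem_ker_truncate]
    intro i hi
    exact coeff_p_pow_mul n y hi

lemma wv_eq_of_truncates {x y : WittVector p R}
    (h : ∀ n, WittVector.truncate n x = WittVector.truncate n y) : x = y := by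
  rw [← sub_eq_zero, ← Ideal.mem_bot, ← TruncatedWittVector.iInf_ker_truncate, Ideal.mem_iInf]
  intro n
  simp [RingHom.mem_ker, map_sub, h n]

end WittSide

section MASide

variable (p : ℕ) [hp : Fact p.Prime] (R : Type*) [CommRing R] [CharP R p] [PerfectRing R p]

local notation "ε" => monoidAlgebraAugmentation R
local notation "A" => MonoidAlgebra ℤ R
local notation "II" => RingHom.ker (monoidAlgebraAugmentation R)

noncomputable def wittTheta : MonoidAlgebra ℤ R →+* WittVector p R :=
  ((MonoidAlgebra.lift ℤ (WittVector p R) R) (WittVector.teichmuller p)).toRingHom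

local notation "θ" => wittTheta p R

lemma wittTheta_of (r : R) : θ (MonoidAlgebra.of ℤ R r) = teichmuller p r := by
  simp [wittTheta]

lemma eps_of (r : R) : ε (MonoidAlgebra.of ℤ R r) = r := by
  simp [monoidAlgebraAugmentation]

lemma constantCoeff_wittTheta (a : MonoidAlgebra ℤ R) :
    WittVector.constantCoeff (θ a) = ε a := by
  have key : (WittVector.constantCoeff).comp θ = ε := by
    apply MonoidAlgebra.ringHom_ext
    · intro b
      have h : b • (1 : MonoidAlgebra ℤ R) = MonoidAlgebra.single (1 : R) b := by
        rw [MonoidAlgebra.one_def, MonoidAlgebra.smul_single, smul_eq_mul, mul_one]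
      rw [← h, map_zsmul, map_zsmul, map_one, map_one]
    · intro a
      show WittVector.constantCoeff (θ (MonoidAlgebra.of ℤ R a)) = ε (MonoidAlgebra.of ℤ R a)
      rw [wittTheta_of, eps_of]
      exact teichmuller_coeff_zero p a
  exact RingHom.congr_fun key a

lemma p_mem_I : (p : MonoidAlgebra ℤ R) ∈ II := by
  rw [RingHom.mem_ker, map_natCast]
  exact CharP.cast_eq_zero R p

/-- Generators of the augmentation ideal. -/
def augGen : Set (MonoidAlgebra ℤ R) :=
  {x | ∃ r s : R, x = MonoidAlgebra.of ℤ R r + MonoidAlgebra.of ℤ R s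
      - MonoidAlgebra.of ℤ R (r + s)}

lemma of_zero_mem_span : MonoidAlgebra.of ℤ R 0 ∈ Ideal.span (augGen R) := by
  have h : MonoidAlgebra.of ℤ R 0 = MonoidAlgebra.of ℤ R 0 + MonoidAlgebra.of ℤ R 0
      - MonoidAlgebra.of ℤ R (0 + 0) := by
    rw [zero_add]; ring
  exact Ideal.subset_span ⟨0, 0, h⟩

lemma gen_mem_span (r s : R) :
    MonoidAlgebra.of ℤ R r + MonoidAlgebra.of ℤ R s - MonoidAlgebra.of ℤ R (r + s)
      ∈ Ideal.span (augGen R) :=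
  Ideal.subset_span ⟨r, s, rfl⟩

lemma zsmul_of_sub_mem (n : ℤ) (r : R) :
    n • MonoidAlgebra.of ℤ R r - MonoidAlgebra.of ℤ R (n • r) ∈ Ideal.span (augGen R) := by
  induction n using Int.induction_on with
  | zero => simpa using neg_mem (of_zero_mem_span R)
  | succ n ih =>
    have h : ((n : ℤ) + 1) • MonoidAlgebra.of ℤ R r - MonoidAlgebra.of ℤ R (((n : ℤ) + 1) • r)
        = ((n : ℤ) • MonoidAlgebra.of ℤ R r - MonoidAlgebra.of ℤ R ((n : ℤ) • r))
          + (MonoidAlgebra.of ℤ R ((n : ℤ) • r) + MonoidAlgebra.of ℤ R r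
              - MonoidAlgebra.of ℤ R ((n : ℤ) • r + r)) := by
      rw [add_smul, one_smul, add_smul, one_smul]
      abel
    rw [h]
    exact add_mem ih (gen_mem_span R _ _)
  | pred n ih =>
    have h : (-(n : ℤ) - 1) • MonoidAlgebra.of ℤ R r - MonoidAlgebra.of ℤ R ((-(n : ℤ) - 1) • r)
        = ((-(n : ℤ)) • MonoidAlgebra.of ℤ R r - MonoidAlgebra.of ℤ R ((-(n : ℤ)) • r))
          - (MonoidAlgebra.of ℤ R ((-(n : ℤ) - 1) • r) + MonoidAlgebra.of ℤ R r
              - MonoidAlgebra.of ℤ R ((-(n : ℤ) - 1) • r + r)) := by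
      have : (-(n : ℤ) - 1) • r + r = (-(n : ℤ)) • r := by
        rw [sub_smul, one_smul]; abel
      rw [this, sub_smul, one_smul]
      abel
    rw [h]
    exact sub_mem ih (gen_mem_span R _ _)

lemma sub_of_eps_mem (a : MonoidAlgebra ℤ R) :
    a - MonoidAlgebra.of ℤ R (ε a) ∈ Ideal.span (augGen R) := by
  induction a using MonoidAlgebra.induction_on with
  | of g => rw [eps_of]; simp
  | add f g hf hg =>
    have h : f + g - MonoidAlgebra.of ℤ R (ε (f + g))
        = (f - MonoidAlgebra.of ℤ R (ε f)) + (g - MonoidAlgebra.of ℤ R (ε g))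
          + (MonoidAlgebra.of ℤ R (ε f) + MonoidAlgebra.of ℤ R (ε g)
              - MonoidAlgebra.of ℤ R (ε f + ε g)) := by
      rw [map_add]; abel
    rw [h]
    exact add_mem (add_mem hf hg) (gen_mem_span R _ _)
  | smul n f hf =>
    have h : n • f - MonoidAlgebra.of ℤ R (ε (n • f))
        = n • (f - MonoidAlgebra.of ℤ R (ε f))
          + (n • MonoidAlgebra.of ℤ R (ε f) - MonoidAlgebra.of ℤ R (n • ε f)) := by
      rw [map_zsmul]; rw [smul_sub]; abel
    rw [h]
    exact add_mem (Submodule.smul_of_tower_mem _ n hf) (zsmul_of_sub_mem R n _)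

lemma span_augGen : Ideal.span (augGen R) = II := by
  apply le_antisymm
  · rw [Ideal.span_le]
    rintro x ⟨r, s, rfl⟩
    rw [SetLike.mem_coe, RingHom.mem_ker, map_sub, map_add, eps_of, eps_of, eps_of]
    ring
  · intro x hx
    rw [RingHom.mem_ker] at hx
    have h1 := sub_of_eps_mem R x
    rw [hx] at h1
    have h3 : x = (x - MonoidAlgebra.of ℤ R 0) + MonoidAlgebra.of ℤ R 0 := by ring
    rw [h3]
    exact add_mem h1 (of_zero_mem_span R)


lemma I_le_sup : (II : Ideal (MonoidAlgebra ℤ R))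
    ≤ Ideal.span {(p : MonoidAlgebra ℤ R)} ⊔ II ^ 2 := by
  rw [← span_augGen, Ideal.span_le]
  rintro x ⟨r, s, rfl⟩
  set u : R := (frobeniusEquiv R p).symm r with hu
  set v : R := (frobeniusEquiv R p).symm s with hv
  have hup : u ^ p = r := by
    have := (frobeniusEquiv R p).apply_symm_apply r
    rwa [_root_.frobeniusEquiv_apply, _root_.frobenius_def] at this
  have hvp : v ^ p = s := by
    have := (frobeniusEquiv R p).apply_symm_apply s
    rwa [_root_.frobeniusEquiv_apply, _root_.frobenius_def] at this
  have hwp : (u + v) ^ p = r + s := by rw [add_pow_char u v p, hup, hvp]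
  set d : MonoidAlgebra ℤ R := MonoidAlgebra.of ℤ R u + MonoidAlgebra.of ℤ R v
      - MonoidAlgebra.of ℤ R (u + v) with hd
  have hdI : d ∈ Ideal.span (augGen R) := by
    rw [span_augGen, hd, RingHom.mem_ker, map_sub, map_add, eps_of, eps_of, eps_of]
    ring
  obtain ⟨c₁, hc₁⟩ := exists_add_pow_prime_eq hp.out
    (MonoidAlgebra.of ℤ R u) (MonoidAlgebra.of ℤ R v)
  obtain ⟨c₂, hc₂⟩ := exists_add_pow_prime_eq hp.out d (MonoidAlgebra.of ℤ R (u + v))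
  have hofr : MonoidAlgebra.of ℤ R r = (MonoidAlgebra.of ℤ R u) ^ p := by
    rw [← map_pow, hup]
  have hofs : MonoidAlgebra.of ℤ R s = (MonoidAlgebra.of ℤ R v) ^ p := by
    rw [← map_pow, hvp]
  have hofrs : MonoidAlgebra.of ℤ R (r + s) = (MonoidAlgebra.of ℤ R (u + v)) ^ p := by
    rw [← map_pow, hwp]
  have hdw : d + MonoidAlgebra.of ℤ R (u + v)
      = MonoidAlgebra.of ℤ R u + MonoidAlgebra.of ℤ R v := by rw [hd]; ring
  rw [hdw] at hc₂
  have key : MonoidAlgebra.of ℤ R r + MonoidAlgebra.of ℤ R s - MonoidAlgebra.of ℤ R (r + s)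
      = d ^ p + (p : MonoidAlgebra ℤ R) * (d * MonoidAlgebra.of ℤ R (u + v) * c₂
          - MonoidAlgebra.of ℤ R u * MonoidAlgebra.of ℤ R v * c₁) := by
    rw [hofr, hofs, hofrs]
    have := hc₁.symm.trans hc₂
    linear_combination this
  rw [SetLike.mem_coe, key]
  refine add_mem (Submodule.mem_sup_right ?_) (Submodule.mem_sup_left ?_)
  · exact Ideal.pow_le_pow_right hp.out.two_le (Ideal.pow_mem_pow hdI p)
  · exact Ideal.mem_span_singleton.mpr ⟨_, rfl⟩

lemma In_le_sup (n : ℕ) : (II : Ideal (MonoidAlgebra ℤ R)) ^ n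
    ≤ Ideal.span {(p : MonoidAlgebra ℤ R) ^ n} ⊔ II ^ (n + 1) := by
  induction n with
  | zero => simp [Ideal.span_singleton_one]
  | succ n ih =>
    have hmul : (II : Ideal (MonoidAlgebra ℤ R)) ^ (n + 1) = II ^ n * II := by
      rw [pow_succ]
    rw [hmul]
    calc (II : Ideal (MonoidAlgebra ℤ R)) ^ n * II
        ≤ (Ideal.span {(p : MonoidAlgebra ℤ R) ^ n} ⊔ II ^ (n + 1))
            * (Ideal.span {(p : MonoidAlgebra ℤ R)} ⊔ II ^ 2) :=
          Ideal.mul_mono ih (I_le_sup p R)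
      _ ≤ Ideal.span {(p : MonoidAlgebra ℤ R) ^ (n + 1)} ⊔ II ^ (n + 2) := by
          rw [Ideal.sup_mul, Ideal.mul_sup, Ideal.mul_sup]
          have hpn : Ideal.span {(p : MonoidAlgebra ℤ R) ^ n} ≤ II ^ n := by
            rw [Ideal.span_le, Set.singleton_subset_iff]
            exact Ideal.pow_mem_pow (p_mem_I p R) n
          have hp1 : Ideal.span {(p : MonoidAlgebra ℤ R)} ≤ II := by
            rw [Ideal.span_le, Set.singleton_subset_iff]
            exact p_mem_I p R
          refine sup_le (sup_le ?_ ?_) (sup_le ?_ ?_)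
          · rw [Ideal.span_singleton_mul_span_singleton, ← pow_succ]
            exact le_sup_left
          · have h2 : Ideal.span {(p : MonoidAlgebra ℤ R) ^ n} * II ^ 2 ≤ II ^ n * II ^ 2 :=
              Ideal.mul_mono hpn le_rfl
            rw [← pow_add] at h2
            exact le_trans h2 le_sup_right
          · have h3 : (II : Ideal (MonoidAlgebra ℤ R)) ^ (n + 1) * Ideal.span {(p : MonoidAlgebra ℤ R)}
                ≤ II ^ (n + 1) * II := Ideal.mul_mono le_rfl hp1
            rw [← pow_succ] at h3
            exact le_trans h3 le_sup_right
          · have h4 : (II : Ideal (MonoidAlgebra ℤ R)) ^ (n + 1) * II ^ 2 ≤ II ^ (n + 2) := by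
              rw [← pow_add]
              exact Ideal.pow_le_pow_right (by omega)
            exact le_trans h4 le_sup_right

lemma theta_pow_mem {x : MonoidAlgebra ℤ R} {n : ℕ} (hx : x ∈ (II : Ideal (MonoidAlgebra ℤ R)) ^ n) :
    ∃ y, θ x = (p : WittVector p R) ^ n * y := by
  have hmap : Ideal.map θ ((II : Ideal (MonoidAlgebra ℤ R)) ^ n)
      ≤ Ideal.span {(p : WittVector p R) ^ n} := by
    rw [Ideal.map_pow, ← Ideal.span_singleton_pow]
    apply Ideal.pow_right_mono
    rw [Ideal.map_le_iff_le_comap]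
    intro a ha
    rw [Ideal.mem_comap, Ideal.mem_span_singleton]
    have h0 : (θ a).coeff 0 = 0 := by
      rw [← constantCoeff_apply, constantCoeff_wittTheta]
      exact ha
    obtain ⟨y, hy⟩ := exists_eq_p_pow_mul 1 (θ a) (by intro i hi; interval_cases i; exact h0)
    exact ⟨y, by rw [hy, pow_one]⟩
  have := hmap (Ideal.mem_map_of_mem θ hx)
  rwa [Ideal.mem_span_singleton] at this

lemma ker_theta_pow {x : MonoidAlgebra ℤ R} (n : ℕ)
    (h : ∃ y, θ x = (p : WittVector p R) ^ n * y) :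
    x ∈ (II : Ideal (MonoidAlgebra ℤ R)) ^ n := by
  induction n with
  | zero => simp [pow_zero, Ideal.one_eq_top]
  | succ n ih =>
    obtain ⟨y, hy⟩ := h
    have hxn : x ∈ (II : Ideal (MonoidAlgebra ℤ R)) ^ n := ih ⟨(p : WittVector p R) * y, by rw [hy]; ring⟩
    obtain ⟨u, hu, z, hz, hx⟩ := Submodule.mem_sup.mp (In_le_sup p R n hxn)
    obtain ⟨a, rfl⟩ := Ideal.mem_span_singleton.mp hu
    obtain ⟨w, hw⟩ := theta_pow_mem p R hz
    have hθx : θ ((p : MonoidAlgebra ℤ R) ^ n * a) = θ x - θ z := by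
      rw [← hx, map_add]; ring
    have h1 : (p : WittVector p R) ^ n * θ a
        = (p : WittVector p R) ^ n * ((p : WittVector p R) * (y - w)) := by
      have h2 : θ ((p : MonoidAlgebra ℤ R) ^ n * a) = (p : WittVector p R) ^ n * θ a := by
        rw [map_mul, map_pow, map_natCast]
      rw [← h2, hθx, hy, hw]
      ring
    have h2 : θ a = (p : WittVector p R) * (y - w) := p_pow_mul_inj n h1
    have h3 : a ∈ (II : Ideal (MonoidAlgebra ℤ R)) := by
      rw [RingHom.mem_ker, ← constantCoeff_wittTheta p R, h2, map_mul, map_natCast]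
      simp [CharP.cast_eq_zero R p]
    rw [← hx]
    refine add_mem ?_ hz
    rw [pow_succ]
    exact Ideal.mul_mem_mul (Ideal.pow_mem_pow (p_mem_I p R) n) h3

lemma theta_surj_mod (x : WittVector p R) (n : ℕ) :
    ∃ a : MonoidAlgebra ℤ R, ∃ y, x = θ a + (p : WittVector p R) ^ n * y := by
  induction n with
  | zero => exact ⟨0, x, by simp⟩
  | succ n ih =>
    obtain ⟨a, y, hy⟩ := ih
    set c := y.coeff 0 with hc
    have h0 : ∀ i < 1, (y - teichmuller p c).coeff i = 0 := by
      intro i hi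
      interval_cases i
      rw [← constantCoeff_apply, map_sub]
      have ht : WittVector.constantCoeff (teichmuller p c) = c := teichmuller_coeff_zero p c
      rw [ht, constantCoeff_apply, hc, sub_self]
    obtain ⟨z, hzeq⟩ := exists_eq_p_pow_mul 1 (y - teichmuller p c) h0
    refine ⟨a + (p : MonoidAlgebra ℤ R) ^ n * MonoidAlgebra.of ℤ R c, z, ?_⟩
    rw [map_add, map_mul, map_pow, map_natCast, wittTheta_of]
    have hy2 : y = teichmuller p c + (p : WittVector p R) * z := by
      rw [pow_one] at hzeq
      rw [← hzeq]; ring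
    rw [hy, hy2]
    ring

lemma smulTop (n : ℕ) :
    ((II : Ideal (MonoidAlgebra ℤ R)) ^ n • ⊤ : Ideal (MonoidAlgebra ℤ R))
      = (II : Ideal (MonoidAlgebra ℤ R)) ^ n := by
  ext x; simp

/-- The truncated map on the quotient. -/
noncomputable def Theta (n : ℕ) :
    MonoidAlgebra ℤ R ⧸ (II : Ideal (MonoidAlgebra ℤ R)) ^ n →+* TruncatedWittVector p n R :=
  Ideal.Quotient.lift _ ((WittVector.truncate n).comp θ) (fun a ha => by
    obtain ⟨y, hy⟩ := theta_pow_mem p R ha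
    show WittVector.truncate n (θ a) = 0
    rw [truncate_eq_zero_iff]
    exact ⟨y, hy⟩)

/-- The map from the adic completion to truncated Witt vectors. -/
noncomputable def gmap (n : ℕ) :
    AdicCompletion (II) (MonoidAlgebra ℤ R) →+* TruncatedWittVector p n R :=
  (Theta p R n).comp ((AdicCompletion.evalₐ (II) n).toRingHom)

lemma evalₐ_val {n : ℕ} (x : AdicCompletion (II) (MonoidAlgebra ℤ R)) (a : MonoidAlgebra ℤ R)
    (h : x.val n = Submodule.Quotient.mk a) :
    AdicCompletion.evalₐ (II) n x = Ideal.Quotient.mk ((II : Ideal (MonoidAlgebra ℤ R)) ^ n) a := by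
  show (Ideal.quotientEquivAlgOfEq _ (by ext x; simp)) (AdicCompletion.eval (II) (MonoidAlgebra ℤ R) n x) = _
  rw [AdicCompletion.eval_apply, h]
  exact Ideal.quotientEquivAlgOfEq_mk _ _ a

lemma gmap_apply (n : ℕ) (x : AdicCompletion (II) (MonoidAlgebra ℤ R)) (a : MonoidAlgebra ℤ R)
    (h : x.val n = Submodule.Quotient.mk a) :
    gmap p R n x = WittVector.truncate n (θ a) := by
  have h1 := evalₐ_val R x a h
  show Theta p R n (AdicCompletion.evalₐ (II) n x) = _
  rw [h1]
  rfl

lemma gmap_compat : ∀ (k₁ k₂ : ℕ) (hk : k₁ ≤ k₂),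
    (TruncatedWittVector.truncate hk).comp (gmap p R k₂) = gmap p R k₁ := by
  intro k₁ k₂ hk
  apply RingHom.ext
  intro x
  obtain ⟨a₂, ha₂⟩ := Submodule.Quotient.mk_surjective _ (x.val k₂)
  obtain ⟨a₁, ha₁⟩ := Submodule.Quotient.mk_surjective _ (x.val k₁)
  have hcompat := x.property hk
  rw [← ha₂, ← ha₁] at hcompat
  have hmk : (Submodule.Quotient.mk a₂ :
      MonoidAlgebra ℤ R ⧸ ((II : Ideal (MonoidAlgebra ℤ R)) ^ k₁ • ⊤ : Ideal _))
      = Submodule.Quotient.mk a₁ := by rw [← hcompat]; rfl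
  have hdiff : a₂ - a₁ ∈ (II : Ideal (MonoidAlgebra ℤ R)) ^ k₁ := by
    rw [Submodule.Quotient.eq, smulTop] at hmk
    exact hmk
  obtain ⟨y, hy⟩ := theta_pow_mem p R hdiff
  rw [RingHom.comp_apply, gmap_apply p R k₂ x a₂ ha₂.symm, gmap_apply p R k₁ x a₁ ha₁.symm,
    TruncatedWittVector.truncate_wittVector_truncate]
  rw [← sub_eq_zero, ← map_sub, ← map_sub, truncate_eq_zero_iff]
  exact ⟨y, hy⟩

/-- The comparison map from the adic completion to the Witt vectors. -/
noncomputable def psi : AdicCompletion (II) (MonoidAlgebra ℤ R) →+* WittVector p R :=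
  WittVector.lift (fun n => gmap p R n) (gmap_compat p R)

lemma psi_of (a : MonoidAlgebra ℤ R) :
    psi p R (AdicCompletion.of (II) (MonoidAlgebra ℤ R) a) = θ a := by
  apply wv_eq_of_truncates
  intro n
  rw [psi, WittVector.truncate_lift]
  exact gmap_apply p R n _ a rfl

lemma psi_injective : Function.Injective (psi p R) := by
  rw [injective_iff_map_eq_zero]
  intro x hx
  have hval : ∀ n, x.val n = 0 := by
    intro n
    obtain ⟨a, ha⟩ := Submodule.Quotient.mk_surjective _ (x.val n)
    have h0 : WittVector.truncate n (psi p R x) = 0 := by rw [hx, map_zero]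
    rw [psi, WittVector.truncate_lift, gmap_apply p R n x a ha.symm,
      truncate_eq_zero_iff] at h0
    have hmem := ker_theta_pow p R n h0
    rw [← ha, Submodule.Quotient.mk_eq_zero, smulTop]
    exact hmem
  exact Subtype.ext (funext hval)

lemma psi_surjective : Function.Surjective (psi p R) := by
  intro w
  choose a y hay using fun n => theta_surj_mod p R w n
  have hθa : ∀ n, θ (a n) = w - (p : WittVector p R) ^ n * y n := by
    intro n
    rw [hay n]; ring
  have hcomp : ∀ {m n : ℕ}, m ≤ n → a n - a m ∈ (II : Ideal (MonoidAlgebra ℤ R)) ^ m := by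
    intro m n h
    apply ker_theta_pow p R m
    refine ⟨y m - (p : WittVector p R) ^ (n - m) * y n, ?_⟩
    have hpow : (p : WittVector p R) ^ m * (p : WittVector p R) ^ (n - m)
        = (p : WittVector p R) ^ n := by
      rw [← pow_add]
      congr 1
      omega
    rw [map_sub, hθa n, hθa m, mul_sub, ← mul_assoc, hpow]
    ring
  set x : AdicCompletion (II) (MonoidAlgebra ℤ R) :=
    ⟨fun n => Submodule.Quotient.mk (a n), by
      intro m n h
      show AdicCompletion.transitionMap (II) (MonoidAlgebra ℤ R) h
          (Submodule.Quotient.mk (a n)) = Submodule.Quotient.mk (a m)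
      have h1 : AdicCompletion.transitionMap (II) (MonoidAlgebra ℤ R) h
          (Submodule.Quotient.mk (a n)) = Submodule.Quotient.mk (a n) := rfl
      rw [h1, Submodule.Quotient.eq, smulTop]
      exact hcomp h⟩ with hxdef
  refine ⟨x, ?_⟩
  apply wv_eq_of_truncates
  intro n
  rw [psi, WittVector.truncate_lift, gmap_apply p R n x (a n) rfl]
  rw [← sub_eq_zero, ← map_sub, truncate_eq_zero_iff]
  refine ⟨-(y n), ?_⟩
  rw [hθa n]
  ring

end MASide

theorem stmt0 (p : ℕ) [Fact p.Prime] (R : Type*) [CommRing R] [CharP R p] [PerfectRing R p] :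
    ∃ φ : AdicCompletion (RingHom.ker (monoidAlgebraAugmentation R))
        (MonoidAlgebra ℤ R) ≃+* WittVector p R,
      ∀ r : R,
        φ (AdicCompletion.of (RingHom.ker (monoidAlgebraAugmentation R))
            (MonoidAlgebra ℤ R) (MonoidAlgebra.of ℤ R r)) =
          WittVector.teichmuller p r := by
  refine ⟨RingEquiv.ofBijective (psi p R) ⟨psi_injective p R, psi_surjective p R⟩, ?_⟩
  intro r
  show psi p R _ = _
  rw [psi_of, wittTheta_of]
end

section
/- Let p be a prime, let M be a commutative monoid on which the p-th power map m ↦ m^p is bijective, let R be a perfect 𝔽_p-algebra, and let f : 𝔽_p[M] → R be a surjective ring homomorphism from the monoid algebra of M over 𝔽_p. Let g : ℤ[M] → R be the composition of the canonical reduction ℤ[M] → 𝔽_p[M] with f, and let I = ker g. Then there is a ring isomorphism φ from the I-adic completion of ℤ[M] (the inverse limit of the rings ℤ[M]/Iⁿ over n) to the ring W(R) of p-typical Witt vectors of R such that for every m ∈ M, φ sends the class of the basis element [m] to the Teichmüller lift τ(f([m])) ∈ W(R). -/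
open WittVector

section WittAux

variable {p : ℕ} [hp : Fact p.Prime] {R : Type*} [CommRing R]

private lemma auxJB_iter_versch_coeff_lt (n : ℕ) (w : WittVector p R) :
    ∀ i < n, (verschiebung^[n] w).coeff i = 0 := by
  induction n generalizing w with
  | zero => omega
  | succ n ih =>
    intro i hi
    rw [Function.iterate_succ_apply' (f := (verschiebung : WittVector p R → WittVector p R))]
    match i with
    | 0 => exact verschiebung_coeff_zero _
    | Nat.succ j =>
      rw [verschiebung_coeff_succ]
      exact ih w j (by omega)

private lemma auxJB_vf [CharP R p] (n : ℕ) (z : WittVector p R) :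
    verschiebung^[n] (frobenius^[n] z) = z * (p : WittVector p R) ^ n := by
  induction n generalizing z with
  | zero => simp
  | succ n ih =>
    rw [Function.iterate_succ_apply (f := (frobenius : WittVector p R → WittVector p R)),
      Function.iterate_succ_apply' (f := (verschiebung : WittVector p R → WittVector p R))]
    rw [ih (frobenius z)]
    have h1 : frobenius z * (p : WittVector p R) ^ n = (p : ℕ) ^ n • frobenius z := by
      rw [nsmul_eq_mul, mul_comm]; push_cast; ring
    rw [h1, map_nsmul, verschiebung_frobenius, nsmul_eq_mul]
    push_cast; ring

private lemma auxJB_mem_ker_iff [CharP R p] [PerfectRing R p] (n : ℕ) (x : WittVector p R) :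
    x ∈ RingHom.ker (truncate n) ↔ ∃ y, x = y * (p : WittVector p R) ^ n := by
  constructor
  · intro hx
    rw [mem_ker_truncate] at hx
    obtain ⟨z, hz⟩ := ((frobenius_bijective p R).iterate n).surjective (x.shift n)
    refine ⟨z, ?_⟩
    rw [← auxJB_vf n z, hz, ← eq_iterate_verschiebung hx]
  · rintro ⟨y, rfl⟩
    rw [mem_ker_truncate]
    intro i hi
    rw [← auxJB_vf n y]
    exact auxJB_iter_versch_coeff_lt n _ i hi

private lemma auxJB_p_cancel [CharP R p] [PerfectRing R p] (x y : WittVector p R)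
    (h : x * (p : WittVector p R) = y * (p : WittVector p R)) : x = y := by
  rw [← verschiebung_frobenius, ← verschiebung_frobenius] at h
  have hV : Function.Injective (verschiebung : WittVector p R → WittVector p R) := by
    intro a b hab
    ext i
    have := congrArg (fun w => WittVector.coeff w (i + 1)) hab
    simpa [verschiebung_coeff_succ] using this
  exact (frobenius_bijective p R).injective (hV h)

private lemma auxJB_W_ext [CharP R p] (u v : WittVector p R)
    (h : ∀ n, truncate n u = truncate n v) : u = v := by
  have hsub : u - v ∈ (⊥ : Ideal (WittVector p R)) := by
    rw [← TruncatedWittVector.iInf_ker_truncate]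
    rw [Ideal.mem_iInf]
    intro n
    rw [RingHom.mem_ker, map_sub, h n, sub_self]
  rw [Ideal.mem_bot, sub_eq_zero] at hsub
  exact hsub

end WittAux

/-- The canonical reduction `ℤ[M] → 𝔽_p[M]` of monoid algebras, sending `[m]` to `[m]`. -/
noncomputable def monoidAlgebraReduction (p : ℕ) (M : Type*) [CommMonoid M] :
    MonoidAlgebra ℤ M →+* MonoidAlgebra (ZMod p) M :=
  ((MonoidAlgebra.lift ℤ (MonoidAlgebra (ZMod p) M) M)
    (MonoidAlgebra.of (ZMod p) M)).toRingHom

section RedAux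

variable (p : ℕ) [hp : Fact p.Prime] (M : Type*) [CommMonoid M]

private lemma auxJB_red_of (m : M) :
    monoidAlgebraReduction p M (MonoidAlgebra.of ℤ M m) = MonoidAlgebra.of (ZMod p) M m := by
  simp [monoidAlgebraReduction]

private lemma auxJB_red_single (m : M) (z : ℤ) :
    monoidAlgebraReduction p M (MonoidAlgebra.single m z)
      = MonoidAlgebra.single m (z : ZMod p) := by
  have h1 : (MonoidAlgebra.single m z : MonoidAlgebra ℤ M) = z • MonoidAlgebra.of ℤ M m := by
    simp [MonoidAlgebra.of_apply, MonoidAlgebra.smul_single']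
  rw [h1, map_zsmul, auxJB_red_of, MonoidAlgebra.of_apply]
  have h2 : z • (MonoidAlgebra.single m (1 : ZMod p)) = MonoidAlgebra.single m (z • (1 : ZMod p)) :=
    MonoidAlgebra.smul_single z m (1 : ZMod p)
  rw [h2, zsmul_one]

private lemma auxJB_red_surj : Function.Surjective (monoidAlgebraReduction p M) := by
  intro b
  induction b using MonoidAlgebra.induction_linear with
  | zero => exact ⟨0, map_zero _⟩
  | add f g hf hg =>
    obtain ⟨a, rfl⟩ := hf; obtain ⟨c, rfl⟩ := hg
    exact ⟨a + c, map_add _ _ _⟩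
  | single m c =>
    refine ⟨MonoidAlgebra.single m (c.val : ℤ), ?_⟩
    rw [auxJB_red_single]
    congr 1
    simp [ZMod.natCast_val, ZMod.cast_id]

private lemma auxJB_red_apply (x : MonoidAlgebra ℤ M) (m' : M) :
    (monoidAlgebraReduction p M x).coeff m' = ((x.coeff m' : ℤ) : ZMod p) := by
  induction x using MonoidAlgebra.induction_linear with
  | zero => simp
  | add f g hf hg =>
    rw [map_add]
    show (monoidAlgebraReduction p M f).coeff m' + (monoidAlgebraReduction p M g).coeff m' = _
    rw [hf, hg]
    show _ = ((f.coeff m' + g.coeff m' : ℤ) : ZMod p)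
    push_cast
    ring
  | single m z =>
    rw [auxJB_red_single]
    classical
    rw [show (MonoidAlgebra.single m z : MonoidAlgebra ℤ M).coeff m' = if m = m' then z else 0 from
      Finsupp.single_apply, show (MonoidAlgebra.single m (z : ZMod p)).coeff m'
        = if m = m' then (z : ZMod p) else 0 from Finsupp.single_apply]
    split <;> simp

private lemma auxJB_ker_red (x : MonoidAlgebra ℤ M) (hx : monoidAlgebraReduction p M x = 0) :
    x ∈ Ideal.span {(p : MonoidAlgebra ℤ M)} := by
  have hdvd : ∀ m' : M, (p : ℤ) ∣ x.coeff m' := by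
    intro m'
    have := congrArg (fun y : MonoidAlgebra (ZMod p) M => y.coeff m') hx
    simp only [auxJB_red_apply] at this
    exact_mod_cast (ZMod.intCast_zmod_eq_zero_iff_dvd _ p).mp this
  rw [Ideal.mem_span_singleton]
  refine ⟨MonoidAlgebra.ofCoeff (Finsupp.mapRange (fun z => z / p) (by simp) x.coeff), ?_⟩
  have hps : (p : MonoidAlgebra ℤ M) = ((p : ℤ) : MonoidAlgebra ℤ M) := by push_cast; rfl
  rw [hps, ← zsmul_eq_mul]
  ext m'
  rw [MonoidAlgebra.coeff_smul_apply, MonoidAlgebra.coeff_ofCoeff, Finsupp.mapRange_apply, smul_eq_mul]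
  exact (Int.mul_ediv_cancel' (hdvd m')).symm

private lemma auxJB_charP_B : CharP (MonoidAlgebra (ZMod p) M) p := by
  have hinj : Function.Injective (MonoidAlgebra.singleOneRingHom :
      ZMod p →+* MonoidAlgebra (ZMod p) M) := by
    intro a b hab
    have := congrArg (fun y : MonoidAlgebra (ZMod p) M => y.coeff 1) hab
    simpa [MonoidAlgebra.singleOneRingHom] using this
  exact charP_of_injective_ringHom hinj p

private lemma auxJB_pow_surj (hM : Function.Bijective fun m : M => m ^ p)
    (x : MonoidAlgebra (ZMod p) M) : ∃ y : MonoidAlgebra (ZMod p) M, y ^ p = x := by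
  haveI := auxJB_charP_B p M
  induction x using MonoidAlgebra.induction_linear with
  | zero => exact ⟨0, by rw [zero_pow hp.out.ne_zero]⟩
  | add f g hf hg =>
    obtain ⟨a, rfl⟩ := hf; obtain ⟨c, rfl⟩ := hg
    exact ⟨a + c, add_pow_char _ _ _⟩
  | single m c =>
    obtain ⟨m', hm'⟩ := hM.2 m
    refine ⟨MonoidAlgebra.single m' c, ?_⟩
    rw [MonoidAlgebra.single_pow]
    simp only at hm'
    rw [hm', ZMod.pow_card]

end RedAux

section PhiAux

variable (p : ℕ) [hp : Fact p.Prime] (M : Type*) [CommMonoid M]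
  (R : Type*) [CommRing R] [CharP R p] [PerfectRing R p]
  (f : MonoidAlgebra (ZMod p) M →+* R)

private lemma auxJB_J_sq (hM : Function.Bijective fun m : M => m ^ p) :
    RingHom.ker f ≤ (RingHom.ker f) ^ 2 := by
  intro x hx
  obtain ⟨y, rfl⟩ := auxJB_pow_surj p M hM x
  have hfy : f y = 0 := by
    apply (frobeniusEquiv R p).injective
    simp only [_root_.frobeniusEquiv_apply, _root_.frobenius_def, map_zero]
    rw [← map_pow]
    simpa [RingHom.mem_ker] using hx
  have hy : y ∈ RingHom.ker f := by rwa [RingHom.mem_ker]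
  have hsplit : y ^ p = y ^ (p - 1) * y := by
    rw [← pow_succ]
    congr 1
    have := hp.out.two_le
    omega
  rw [hsplit, pow_two]
  have h1 : y ^ (p - 1) ∈ RingHom.ker f := by
    have h0 : 0 < p - 1 := by have := hp.out.two_le; omega
    exact Ideal.pow_mem_of_mem _ hy _ h0
  exact Ideal.mul_mem_mul h1 hy

/-- The Teichmüller-lift ring hom `ℤ[M] → W(R)`. -/
private noncomputable def auxJB_Phi : MonoidAlgebra ℤ M →+* WittVector p R :=
  ((MonoidAlgebra.lift ℤ (WittVector p R) M)
    ((WittVector.teichmuller p).comp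
      (f.toMonoidHom.comp (MonoidAlgebra.of (ZMod p) M)))).toRingHom

omit [CharP R p] [PerfectRing R p] in
private lemma auxJB_Phi_of (m : M) :
    auxJB_Phi p M R f (MonoidAlgebra.of ℤ M m)
      = WittVector.teichmuller p (f (MonoidAlgebra.of (ZMod p) M m)) := by
  simp [auxJB_Phi]

omit [CharP R p] [PerfectRing R p] in
private lemma auxJB_const_Phi (a : MonoidAlgebra ℤ M) :
    WittVector.constantCoeff (auxJB_Phi p M R f a)
      = f (monoidAlgebraReduction p M a) := by
  have h : (WittVector.constantCoeff).comp (auxJB_Phi p M R f)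
      = f.comp (monoidAlgebraReduction p M) := by
    apply MonoidAlgebra.ringHom_ext
    · intro b
      have h1 : (MonoidAlgebra.single (1 : M) b : MonoidAlgebra ℤ M)
          = b • (1 : MonoidAlgebra ℤ M) := by
        rw [MonoidAlgebra.one_def]
        rw [show b • (MonoidAlgebra.single (1:M) (1:ℤ)) = MonoidAlgebra.single (1:M) (b • (1:ℤ))
          from MonoidAlgebra.smul_single b (1:M) (1:ℤ), zsmul_one, Int.cast_id]
      rw [h1, map_zsmul, map_zsmul, map_one, map_one]
    · intro m
      have h2 : (MonoidAlgebra.single m (1:ℤ)) = MonoidAlgebra.of ℤ M m := rfl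
      rw [h2]
      simp only [RingHom.comp_apply, auxJB_Phi_of, auxJB_red_of]
      simp [WittVector.teichmuller_coeff_zero]
  exact congrArg (fun F => F a) h

variable {M R f}

private lemma auxJB_J_le_map :
    RingHom.ker f ≤ Ideal.map (monoidAlgebraReduction p M)
      (RingHom.ker (f.comp (monoidAlgebraReduction p M))) := by
  intro a ha
  obtain ⟨b, rfl⟩ := auxJB_red_surj p M a
  apply Ideal.mem_map_of_mem
  rw [RingHom.mem_ker] at ha ⊢
  rw [RingHom.comp_apply]
  exact ha

private lemma auxJB_L (hM : Function.Bijective fun m : M => m ^ p) (n : ℕ) :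
    RingHom.ker (f.comp (monoidAlgebraReduction p M)) ≤
      (RingHom.ker (f.comp (monoidAlgebraReduction p M))) ^ (n + 1)
        ⊔ Ideal.span {(p : MonoidAlgebra ℤ M)} := by
  set I := RingHom.ker (f.comp (monoidAlgebraReduction p M)) with hI
  set P := Ideal.span {(p : MonoidAlgebra ℤ M)} with hP
  have h2 : I ≤ I ^ 2 ⊔ P := by
    intro x hx
    have hximg : monoidAlgebraReduction p M x ∈ RingHom.ker f := by
      rw [RingHom.mem_ker]
      rw [hI, RingHom.mem_ker, RingHom.comp_apply] at hx
      exact hx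
    have hsq := auxJB_J_sq p M R f hM hximg
    have hle : (RingHom.ker f) ^ 2 ≤ Ideal.map (monoidAlgebraReduction p M) (I ^ 2) := by
      rw [Ideal.map_pow]
      exact Ideal.pow_right_mono (auxJB_J_le_map p) 2
    obtain ⟨w, hw, hwx⟩ :=
      (Ideal.mem_map_iff_of_surjective _ (auxJB_red_surj p M)).mp (hle hsq)
    have hxw : x - w ∈ P := auxJB_ker_red p M _ (by rw [map_sub, hwx, sub_self])
    have hrw : x = w + (x - w) := by ring
    rw [hrw]
    exact Submodule.add_mem _ (Submodule.mem_sup_left hw) (Submodule.mem_sup_right hxw)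
  induction n with
  | zero => simpa using le_sup_left
  | succ n ih =>
    refine h2.trans ?_
    have hsq : I ^ 2 ≤ I ^ (n + 2) ⊔ P := by
      rw [pow_two]
      calc I * I ≤ I * (I ^ (n + 1) ⊔ P) := Ideal.mul_mono_right ih
        _ = I * I ^ (n + 1) ⊔ I * P := Ideal.mul_sup _ _ _
        _ ≤ I ^ (n + 2) ⊔ P := by
            apply sup_le_sup
            · rw [← pow_succ']
            · exact Ideal.mul_le_right
    refine sup_le (hsq.trans ?_) ?_
    · exact sup_le_sup_left le_rfl _
    · exact le_sup_right

end PhiAux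

theorem stmt1 (p : ℕ) [Fact p.Prime] (M : Type*) [CommMonoid M]
    (hM : Function.Bijective fun m : M => m ^ p)
    (R : Type*) [CommRing R] [CharP R p] [PerfectRing R p]
    (f : MonoidAlgebra (ZMod p) M →+* R) (hf : Function.Surjective f) :
    ∃ φ : AdicCompletion (RingHom.ker (f.comp (monoidAlgebraReduction p M)))
        (MonoidAlgebra ℤ M) ≃+* WittVector p R,
      ∀ m : M,
        φ (AdicCompletion.of (RingHom.ker (f.comp (monoidAlgebraReduction p M)))
            (MonoidAlgebra ℤ M) (MonoidAlgebra.of ℤ M m)) =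
          WittVector.teichmuller p (f (MonoidAlgebra.of (ZMod p) M m)) := by
  classical
  set g := f.comp (monoidAlgebraReduction p M) with hg
  set I : Ideal (MonoidAlgebra ℤ M) := RingHom.ker g with hI
  set Φ := auxJB_Phi p M R f with hPhi
  have hsmul_top : ∀ n : ℕ, (I ^ n • ⊤ : Ideal (MonoidAlgebra ℤ M)) = I ^ n := fun n => by
    ext x; simp
  have hconst : ∀ a, WittVector.constantCoeff (Φ a) = g a := fun a => auxJB_const_Phi p M R f a
  have hp_mem : (p : MonoidAlgebra ℤ M) ∈ I := by
    rw [hI, RingHom.mem_ker, map_natCast, CharP.cast_eq_zero]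
  -- direction 1 : `Φ` maps `I ^ n` into `ker (truncate n)`
  have hIto : ∀ x ∈ I, ∃ y, Φ x = y * (p : WittVector p R) := by
    intro x hx
    have h0 : (Φ x).coeff 0 = 0 := by
      rw [show (Φ x).coeff 0 = WittVector.constantCoeff (Φ x) from rfl, hconst]
      rwa [hI, RingHom.mem_ker] at hx
    have hk : Φ x ∈ RingHom.ker (truncate 1) := by
      rw [mem_ker_truncate]; intro i hi; interval_cases i; exact h0
    obtain ⟨y, hy⟩ := (auxJB_mem_ker_iff 1 (Φ x)).mp hk
    exact ⟨y, by rw [hy, pow_one]⟩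
  have hdir1 : ∀ n, ∀ a ∈ I ^ n, Φ a ∈ RingHom.ker (truncate n) := by
    intro n a ha
    rw [auxJB_mem_ker_iff]
    have h1 : I ≤ Ideal.comap Φ (Ideal.span {(p : WittVector p R)}) := by
      intro x hx
      rw [Ideal.mem_comap, Ideal.mem_span_singleton]
      obtain ⟨y, hy⟩ := hIto x hx
      exact ⟨y, by rw [hy, mul_comm]⟩
    have h2 : I ^ n ≤ Ideal.comap Φ ((Ideal.span {(p : WittVector p R)}) ^ n) := by
      refine le_trans (Ideal.pow_right_mono h1 n) ?_
      rw [← Ideal.map_le_iff_le_comap, Ideal.map_pow]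
      exact Ideal.pow_right_mono Ideal.map_comap_le n
    have h3 := h2 ha
    rw [Ideal.mem_comap, Ideal.span_singleton_pow, Ideal.mem_span_singleton] at h3
    obtain ⟨y, hy⟩ := h3
    exact ⟨y, by rw [hy, mul_comm]⟩
  -- direction 2 : `Φ ⁻¹ (ker (truncate n)) ⊆ I ^ n`
  have hdir2 : ∀ n x, Φ x ∈ RingHom.ker (truncate n) → x ∈ I ^ n := by
    intro n
    induction n with
    | zero => intro x _; rw [pow_zero, Ideal.one_eq_top]; exact Submodule.mem_top
    | succ n ih =>
      intro x hx
      have hxI : x ∈ I := by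
        rw [hI, RingHom.mem_ker, ← hconst]
        exact (mem_ker_truncate _ _).mp hx 0 (Nat.succ_pos n)
      obtain ⟨u, hu, c, hc, hx_eq⟩ := Submodule.mem_sup.mp (auxJB_L p hM n hxI)
      obtain ⟨v, hv⟩ := Ideal.mem_span_singleton'.mp hc
      have hPhiu := hdir1 (n + 1) u hu
      have hPhic : Φ c ∈ RingHom.ker (truncate (n + 1)) := by
        have hceq : Φ c = Φ x - Φ u := by
          rw [← hx_eq, map_add]; ring
        rw [hceq]
        exact sub_mem hx hPhiu
      obtain ⟨y, hy⟩ := (auxJB_mem_ker_iff (n + 1) (Φ c)).mp hPhic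
      have hvy : Φ v * (p : WittVector p R) = y * (p : WittVector p R) ^ n
          * (p : WittVector p R) := by
        have h4 : Φ v * (p : WittVector p R) = Φ c := by
          rw [← hv, map_mul, map_natCast]
        rw [h4, hy, pow_succ]; ring
      have hPhiv : Φ v = y * (p : WittVector p R) ^ n :=
        auxJB_p_cancel _ _ hvy
      have hvIn : v ∈ I ^ n := ih v ((auxJB_mem_ker_iff n _).mpr ⟨y, hPhiv⟩)
      have hcm : c ∈ I ^ (n + 1) := by
        rw [← hv, pow_succ]
        exact Ideal.mul_mem_mul hvIn hp_mem
      rw [← hx_eq]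
      exact Submodule.add_mem _ hu hcm
  -- surjectivity of `g`
  have hgsurj : Function.Surjective g := by
    intro r
    obtain ⟨b, hb⟩ := hf r
    obtain ⟨a, ha⟩ := auxJB_red_surj p M b
    exact ⟨a, by rw [hg, RingHom.comp_apply, ha, hb]⟩
  -- approximate surjectivity of `Φ`
  have hsurj : ∀ n (w : WittVector p R), ∃ a, truncate n (Φ a) = truncate n w := by
    intro n
    induction n with
    | zero => intro w; exact ⟨0, by ext i; exact i.elim0⟩
    | succ n ih =>
      intro w
      obtain ⟨a, ha⟩ := ih w
      have h1 : w - Φ a ∈ RingHom.ker (truncate n) := by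
        rw [RingHom.mem_ker, map_sub, ha, sub_self]
      obtain ⟨u, hu⟩ := (auxJB_mem_ker_iff n _).mp h1
      obtain ⟨b, hb⟩ := hgsurj (WittVector.constantCoeff u)
      refine ⟨a + b * (p : MonoidAlgebra ℤ M) ^ n, ?_⟩
      have hPhib : Φ (a + b * (p : MonoidAlgebra ℤ M) ^ n)
          = Φ a + Φ b * (p : WittVector p R) ^ n := by
        rw [map_add, map_mul, map_pow, map_natCast]
      have hub : u - Φ b ∈ RingHom.ker (truncate 1) := by
        rw [mem_ker_truncate]
        intro i hi
        interval_cases i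
        show WittVector.constantCoeff (u - Φ b) = 0
        rw [map_sub, hconst, hb, sub_self]
      obtain ⟨y, hy⟩ := (auxJB_mem_ker_iff 1 _).mp hub
      have hwsub : w - Φ (a + b * (p : MonoidAlgebra ℤ M) ^ n)
          = y * (p : WittVector p R) ^ (n + 1) := by
        rw [hPhib]
        have h5 : w - (Φ a + Φ b * (p : WittVector p R) ^ n)
            = (w - Φ a) - Φ b * (p : WittVector p R) ^ n := by ring
        rw [h5, hu, ← sub_mul, hy, pow_one, pow_succ]
        ring
      have h6 := (auxJB_mem_ker_iff (n + 1) _).mpr ⟨y, hwsub⟩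
      rw [RingHom.mem_ker, map_sub] at h6
      exact (sub_eq_zero.mp h6).symm
  -- the compatible family of ring homs on the adic completion
  have hvanish : ∀ n : ℕ, ∀ a ∈ I ^ n, ((truncate n).comp Φ) a = 0 := by
    intro n a ha
    have := hdir1 n a ha
    rwa [RingHom.mem_ker] at this
  set ρ : ∀ n : ℕ, AdicCompletion I (MonoidAlgebra ℤ M) →+* TruncatedWittVector p n R :=
    fun n => (Ideal.Quotient.lift (I ^ n) ((truncate n).comp Φ) (hvanish n)).comp
      (AdicCompletion.evalₐ I n).toRingHom with hρ
  have hρ_mk : ∀ (n : ℕ) (seq : AdicCompletion.AdicCauchySequence I (MonoidAlgebra ℤ M)),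
      ρ n (AdicCompletion.mk I _ seq) = truncate n (Φ (seq.val n)) := by
    intro n seq
    have hstep : ρ n (AdicCompletion.mk I _ seq)
        = Ideal.Quotient.lift (I ^ n) ((truncate n).comp Φ) (hvanish n)
          (AdicCompletion.evalₐ I n (AdicCompletion.mk I _ seq)) := rfl
    rw [hstep, AdicCompletion.evalₐ_mk, Ideal.Quotient.lift_mk, RingHom.comp_apply]
  have hcompat : ∀ (k₁ k₂ : ℕ) (hk : k₁ ≤ k₂),
      (TruncatedWittVector.truncate hk).comp (ρ k₂) = ρ k₁ := by
    intro k₁ k₂ hk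
    apply RingHom.ext
    intro x
    induction x using AdicCompletion.induction_on with | _ seq => ?_
    rw [RingHom.comp_apply, hρ_mk, hρ_mk, TruncatedWittVector.truncate_wittVector_truncate]
    have hmem : seq.val k₁ - seq.val k₂ ∈ I ^ k₁ := by
      have := SModEq.sub_mem.mp (seq.property hk)
      rwa [hsmul_top] at this
    have h7 := hvanish k₁ _ hmem
    rw [RingHom.comp_apply, map_sub, map_sub, sub_eq_zero] at h7
    exact h7.symm
  set Ψ := WittVector.lift (fun n => ρ n) hcompat with hΨ
  have htrunc : ∀ (n : ℕ) x, truncate n (Ψ x) = ρ n x := by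
    intro n x
    rw [hΨ, WittVector.truncate_lift]
  have hinj : Function.Injective Ψ := by
    refine (injective_iff_map_eq_zero Ψ).mpr ?_
    intro x
    induction x using AdicCompletion.induction_on with | _ seq => ?_
    intro h0
    ext n
    have h8 : truncate n (Φ (seq.val n)) = 0 := by
      rw [← hρ_mk, ← htrunc, h0, map_zero]
    have h9 : seq.val n ∈ I ^ n := hdir2 n _ (by rwa [RingHom.mem_ker])
    simp only [AdicCompletion.mk_apply_coe, Submodule.mkQ_apply, AdicCompletion.val_zero, AdicCompletion.val_zero_apply,
      Submodule.Quotient.mk_eq_zero]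
    rwa [hsmul_top]
  have hsurjΨ : Function.Surjective Ψ := by
    intro w
    choose a ha using fun n => hsurj n w
    have hcauchy : ∀ n, a n ≡ a (n + 1)
        [SMOD (I ^ n • ⊤ : Submodule (MonoidAlgebra ℤ M) (MonoidAlgebra ℤ M))] := by
      intro n
      rw [SModEq.sub_mem, hsmul_top]
      apply hdir2
      rw [RingHom.mem_ker, map_sub, map_sub]
      have h1 : truncate n (Φ (a (n + 1))) = truncate n w := by
        have h2 := congrArg (TruncatedWittVector.truncate (Nat.le_succ n)) (ha (n + 1))
        rwa [TruncatedWittVector.truncate_wittVector_truncate, TruncatedWittVector.truncate_wittVector_truncate] at h2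
      rw [ha n, h1, sub_self]
    refine ⟨AdicCompletion.mk I _ (AdicCompletion.AdicCauchySequence.mk I _ a hcauchy), ?_⟩
    apply auxJB_W_ext
    intro n
    rw [htrunc, hρ_mk]
    exact ha n
  refine ⟨RingEquiv.ofBijective Ψ ⟨hinj, hsurjΨ⟩, ?_⟩
  intro m
  show Ψ (AdicCompletion.of I _ (MonoidAlgebra.of ℤ M m)) = _
  have hofmk : AdicCompletion.of I (MonoidAlgebra ℤ M) (MonoidAlgebra.of ℤ M m)
      = AdicCompletion.mk I _
        (AdicCompletion.AdicCauchySequence.mk I _ (fun _ => MonoidAlgebra.of ℤ M m)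
          (fun _ => SModEq.refl _)) := rfl
  rw [hofmk]
  apply auxJB_W_ext
  intro n
  rw [htrunc, hρ_mk]
  show truncate n (Φ (MonoidAlgebra.of ℤ M m)) = _
  rw [hPhi, auxJB_Phi_of]
end

section
/- Let p be a prime and let M be a commutative monoid on which the p-th power map m ↦ m^p is bijective. Then the monoid algebra 𝔽_p[M] = MonoidAlgebra (ZMod p) M is a perfect ring of characteristic p, i.e. its Frobenius endomorphism x ↦ x^p is bijective. In particular, for every perfect 𝔽_p-algebra R, the monoid algebra 𝔽_p[R] of the multiplicative monoid (R,·) is a perfect 𝔽_p-algebra. -/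
theorem aux_stmt2 (p : ℕ) [Fact p.Prime] (M : Type*) [CommMonoid M]
    (hM : Function.Bijective fun m : M => m ^ p) :
    CharP (MonoidAlgebra (ZMod p) M) p ∧
      Function.Bijective fun x : MonoidAlgebra (ZMod p) M => x ^ p := by
  have hchar : CharP (MonoidAlgebra (ZMod p) M) p :=
    charP_of_injective_algebraMap' (ZMod p) p
  refine ⟨hchar, ?_⟩
  have hfrob : (frobenius (MonoidAlgebra (ZMod p) M) p : MonoidAlgebra (ZMod p) M →+* _)
      = MonoidAlgebra.mapDomainRingHom (ZMod p) (powMonoidHom p : M →* M) := by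
    apply MonoidAlgebra.ringHom_ext
    · intro b
      rw [frobenius_def, MonoidAlgebra.single_pow, one_pow, ZMod.pow_card]
      simp [MonoidAlgebra.mapDomainRingHom, Finsupp.mapDomain_single]
    · intro a
      rw [frobenius_def, MonoidAlgebra.single_pow, one_pow]
      simp [MonoidAlgebra.mapDomainRingHom, Finsupp.mapDomain_single, powMonoidHom]
  have h1 : (fun x : MonoidAlgebra (ZMod p) M => x ^ p)
      = MonoidAlgebra.mapDomainRingEquiv (ZMod p) (MulEquiv.ofBijective (powMonoidHom p : M →* M) hM) := by
    funext x
    have := congrArg (fun f => (f : MonoidAlgebra (ZMod p) M →+* _) x) hfrob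
    simp only [frobenius_def] at this
    rw [this]
    rfl
  rw [h1]
  exact (MonoidAlgebra.mapDomainRingEquiv (ZMod p) (MulEquiv.ofBijective (powMonoidHom p : M →* M) hM)).bijective

theorem stmt2 (p : ℕ) [Fact p.Prime] (M : Type*) [CommMonoid M]
    (hM : Function.Bijective fun m : M => m ^ p) :
    (CharP (MonoidAlgebra (ZMod p) M) p ∧
      Function.Bijective fun x : MonoidAlgebra (ZMod p) M => x ^ p) ∧
    ∀ (R : Type*) [CommRing R] [CharP R p] [PerfectRing R p],
      CharP (MonoidAlgebra (ZMod p) R) p ∧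
        Function.Bijective fun x : MonoidAlgebra (ZMod p) R => x ^ p := by
  refine ⟨aux_stmt2 p M hM, fun R _ _ _ => aux_stmt2 p R ?_⟩
  have h := PerfectRing.bijective_frobenius (R := R) (p := p)
  have heq : (fun r : R => r ^ p) = ⇑(frobenius R p) :=
    funext fun x => (frobenius_def p x).symm
  rw [heq]
  exact h
end

section
/- Let p be a prime and let R and S be perfect 𝔽_p-algebras. Then the tensor product R ⊗_{𝔽_p} S (over ZMod p) is a perfect 𝔽_p-algebra, i.e. it has characteristic p and its Frobenius x ↦ x^p is bijective. -/
open TensorProduct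

theorem stmt5 (p : ℕ) [Fact p.Prime]
    (R : Type*) [CommRing R] [CharP R p] [PerfectRing R p] [Algebra (ZMod p) R]
    (S : Type*) [CommRing S] [CharP S p] [PerfectRing S p] [Algebra (ZMod p) S] :
    CharP (TensorProduct (ZMod p) R S) p ∧
      Function.Bijective fun x : TensorProduct (ZMod p) R S => x ^ p := by
  have hp := (Fact.out : p.Prime)
  haveI : Nontrivial R := CharP.nontrivial_of_char_ne_one hp.ne_one
  haveI : Nontrivial S := CharP.nontrivial_of_char_ne_one hp.ne_one
  haveI : Nontrivial (R ⊗[ZMod p] S) :=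
    Module.FaithfullyFlat.lTensor_nontrivial (ZMod p) R S
  haveI hchar : CharP (R ⊗[ZMod p] S) p :=
    charP_of_injective_algebraMap (algebraMap (ZMod p) _).injective p
  refine ⟨hchar, ?_⟩
  -- Frobenius equivalences on R and S as algebra equivalences
  let eR : R ≃ₐ[ZMod p] R :=
    { frobeniusEquiv R p with
      commutes' := fun c => by
        simp [frobeniusEquiv_apply, frobenius_def, ← map_pow, ZMod.pow_card] }
  let eS : S ≃ₐ[ZMod p] S :=
    { frobeniusEquiv S p with
      commutes' := fun c => by
        simp [frobeniusEquiv_apply, frobenius_def, ← map_pow, ZMod.pow_card] }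
  let e := Algebra.TensorProduct.congr eR eS
  have key : ∀ x : R ⊗[ZMod p] S, x ^ p = e x := by
    intro x
    induction x using TensorProduct.induction_on with
    | zero => simp [zero_pow hp.ne_zero]
    | tmul r s =>
        simp [e, eR, eS, Algebra.TensorProduct.tmul_pow, frobeniusEquiv_apply, frobenius_def]
    | add a b ha hb => rw [add_pow_char, ha, hb, map_add]
  have : (fun x : R ⊗[ZMod p] S => x ^ p) = ⇑e := funext key
  rw [this]
  exact e.bijective
end

section
/- Let p be a prime, let R be a perfect 𝔽_p-algebra, and let A be a commutative ring that is p-adically complete (IsAdicComplete with respect to the ideal (p)). Then: (i) for every ring homomorphism f : W(R) → A, the map R → A/(p) sending r to the residue class of f(τ(r)) modulo the ideal (p) is a ring homomorphism; and (ii) the assignment f ↦ (r ↦ f(τ(r)) mod (p)) is a bijection from the set of ring homomorphisms W(R) → A to the set of ring homomorphisms R → A/(p). -/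
open WittVector Function Ideal Finset

namespace Stmt8Aux

variable (p : ℕ) [Fact p.Prime]

section RootHom
variable (R : Type*) [CommRing R] [CharP R p] [PerfectRing R p]

/-- iterated p-th root as a ring hom -/
noncomputable def rootHom : ℕ → (R →+* R)
  | 0 => RingHom.id R
  | n + 1 => (rootHom n).comp ((frobeniusEquiv R p).symm : R ≃+* R)

variable {R}

theorem rootHom_zero (r : R) : rootHom p R 0 r = r := rfl

theorem rootHom_succ (n : ℕ) (r : R) :
    rootHom p R (n + 1) r = rootHom p R n ((frobeniusEquiv R p).symm r) := rfl

theorem rootHom_succ_pow (n : ℕ) (r : R) :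
    (rootHom p R (n + 1) r) ^ p = rootHom p R n r := by
  rw [rootHom_succ, ← map_pow]
  congr 1
  have := frobenius_apply_frobeniusEquiv_symm R p r
  rwa [frobenius_def] at this

theorem rootHom_pow (n : ℕ) (r : R) : (rootHom p R n r) ^ p ^ n = r := by
  induction n with
  | zero => simp [rootHom_zero]
  | succ n ih =>
    rw [pow_succ', pow_mul, rootHom_succ_pow, ih]

end RootHom

section Quot
variable {A : Type*} [CommRing A]

theorem mk_eq_mk_iff (a b : A) :
    Ideal.Quotient.mk (Ideal.span {(p : A)}) a = Ideal.Quotient.mk (Ideal.span {(p : A)}) b ↔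
      (p : A) ∣ a - b := by
  rw [Ideal.Quotient.eq, Ideal.mem_span_singleton]

/-- set-theoretic lift -/
noncomputable def qlift (b : A ⧸ Ideal.span {(p : A)}) : A :=
  Function.surjInv Ideal.Quotient.mk_surjective b

theorem mk_qlift (b : A ⧸ Ideal.span {(p : A)}) :
    Ideal.Quotient.mk (Ideal.span {(p : A)}) (qlift p b) = b :=
  Function.surjInv_eq _ b

theorem ghostComponent_congr {u v : WittVector p A}
    (h : ∀ k, (p : A) ∣ u.coeff k - v.coeff k) (n : ℕ) :
    (p : A) ^ (n + 1) ∣ ghostComponent n u - ghostComponent n v := by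
  rw [ghostComponent_apply, ghostComponent_apply, aeval_wittPolynomial, aeval_wittPolynomial,
    ← Finset.sum_sub_distrib]
  refine Finset.dvd_sum fun i hi => ?_
  rw [Finset.mem_range, Nat.lt_succ_iff] at hi
  rw [← mul_sub]
  have h1 : (p : A) ^ (n + 1) = (p : A) ^ i * (p : A) ^ (n - i + 1) := by
    rw [← pow_add]
    congr 1
    omega
  rw [h1]
  exact mul_dvd_mul_left _ (dvd_sub_pow_of_dvd_sub (h i) (n - i))

/-- coefficientwise lift W(A/p) → W(A) -/
noncomputable def sec (y : WittVector p (A ⧸ Ideal.span {(p : A)})) : WittVector p A :=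
  WittVector.mk p fun k => qlift p (y.coeff k)

theorem sec_coeff (y : WittVector p (A ⧸ Ideal.span {(p : A)})) (k : ℕ) :
    (sec p y).coeff k = qlift p (y.coeff k) := by
  simp [sec, WittVector.coeff_mk]

theorem map_sec (y : WittVector p (A ⧸ Ideal.span {(p : A)})) :
    WittVector.map (Ideal.Quotient.mk (Ideal.span {(p : A)})) (sec p y) = y :=
  WittVector.ext fun n => by rw [WittVector.map_coeff, sec_coeff, mk_qlift]

end Quot

section Cseq

variable {R : Type*} [CommRing R] [CharP R p] [PerfectRing R p]
variable {A : Type*} [CommRing A]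

/-- the approximating sequence -/
noncomputable def cseq (g : R →+* A ⧸ Ideal.span {(p : A)}) (n : ℕ) (x : WittVector p R) : A :=
  ghostComponent n (sec p (WittVector.map (g.comp (rootHom p R n)) x))

theorem cseq_eq_sum (g : R →+* A ⧸ Ideal.span {(p : A)}) (n : ℕ) (x : WittVector p R) :
    cseq p g n x =
      ∑ k ∈ Finset.range (n + 1),
        (p : A) ^ k * (qlift p (g (rootHom p R n (x.coeff k)))) ^ p ^ (n - k) := by
  rw [cseq, ghostComponent_apply, aeval_wittPolynomial]
  refine Finset.sum_congr rfl fun i _ => ?_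
  rw [sec_coeff, WittVector.map_coeff, RingHom.comp_apply]

theorem coeff_congr {u v : WittVector p A}
    (huv : WittVector.map (Ideal.Quotient.mk (Ideal.span {(p : A)})) u =
      WittVector.map (Ideal.Quotient.mk (Ideal.span {(p : A)})) v) (k : ℕ) :
    (p : A) ∣ u.coeff k - v.coeff k := by
  rw [← mk_eq_mk_iff, ← WittVector.map_coeff, ← WittVector.map_coeff, huv]

theorem cseq_one (g : R →+* A ⧸ Ideal.span {(p : A)}) (n : ℕ) :
    (p : A) ^ (n + 1) ∣ cseq p g n 1 - 1 := by
  have h1 : (1 : A) = ghostComponent n (1 : WittVector p A) := by rw [map_one]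
  rw [cseq, h1]
  refine ghostComponent_congr p (fun k => coeff_congr p ?_ k) n
  rw [map_sec, _root_.map_one, _root_.map_one]

theorem cseq_add (g : R →+* A ⧸ Ideal.span {(p : A)}) (n : ℕ) (x y : WittVector p R) :
    (p : A) ^ (n + 1) ∣ cseq p g n (x + y) - (cseq p g n x + cseq p g n y) := by
  set h := g.comp (rootHom p R n)
  have h2 : cseq p g n x + cseq p g n y =
      ghostComponent n (sec p (WittVector.map h x) + sec p (WittVector.map h y)) := by
    rw [_root_.map_add]; rfl
  rw [cseq, h2]
  refine ghostComponent_congr p (fun k => coeff_congr p ?_ k) n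
  rw [map_sec, _root_.map_add, _root_.map_add, map_sec, map_sec]

theorem cseq_mul (g : R →+* A ⧸ Ideal.span {(p : A)}) (n : ℕ) (x y : WittVector p R) :
    (p : A) ^ (n + 1) ∣ cseq p g n (x * y) - (cseq p g n x * cseq p g n y) := by
  set h := g.comp (rootHom p R n)
  have h2 : cseq p g n x * cseq p g n y =
      ghostComponent n (sec p (WittVector.map h x) * sec p (WittVector.map h y)) := by
    rw [_root_.map_mul]; rfl
  rw [cseq, h2]
  refine ghostComponent_congr p (fun k => coeff_congr p ?_ k) n
  rw [map_sec, _root_.map_mul, _root_.map_mul, map_sec, map_sec]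

theorem cseq_compat (g : R →+* A ⧸ Ideal.span {(p : A)}) (n : ℕ) (x : WittVector p R) :
    (p : A) ^ (n + 1) ∣ cseq p g (n + 1) x - cseq p g n x := by
  have key : ∀ k ∈ Finset.range (n + 1),
      (p : A) ^ (n + 1) ∣
        (p : A) ^ k * (qlift p (g (rootHom p R (n + 1) (x.coeff k)))) ^ p ^ (n + 1 - k)
        - (p : A) ^ k * (qlift p (g (rootHom p R n (x.coeff k)))) ^ p ^ (n - k) := by
    intro k hk
    rw [Finset.mem_range, Nat.lt_succ_iff] at hk
    have e2 : (qlift p (g (rootHom p R (n + 1) (x.coeff k)))) ^ p ^ (n + 1 - k)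
        = ((qlift p (g (rootHom p R (n + 1) (x.coeff k)))) ^ p) ^ p ^ (n - k) := by
      have e1 : n + 1 - k = (n - k) + 1 := by omega
      rw [e1, pow_succ', pow_mul]
    rw [e2, ← mul_sub]
    have hdvd : (p : A) ∣ (qlift p (g (rootHom p R (n + 1) (x.coeff k)))) ^ p
        - qlift p (g (rootHom p R n (x.coeff k))) := by
      rw [← mk_eq_mk_iff, map_pow]
      simp only [mk_qlift]
      rw [← map_pow, rootHom_succ_pow]
    have h1 : (p : A) ^ (n + 1) = (p : A) ^ k * (p : A) ^ (n - k + 1) := by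
      rw [← pow_add]; congr 1; omega
    rw [h1]
    exact mul_dvd_mul_left _ (dvd_sub_pow_of_dvd_sub hdvd (n - k))
  rw [cseq_eq_sum, cseq_eq_sum, Finset.sum_range_succ]
  have heq : (∑ k ∈ Finset.range (n + 1),
        (p : A) ^ k * (qlift p (g (rootHom p R (n + 1) (x.coeff k)))) ^ p ^ (n + 1 - k))
      + (p : A) ^ (n + 1) *
          (qlift p (g (rootHom p R (n + 1) (x.coeff (n + 1))))) ^ p ^ (n + 1 - (n + 1))
      - ∑ k ∈ Finset.range (n + 1),
        (p : A) ^ k * (qlift p (g (rootHom p R n (x.coeff k)))) ^ p ^ (n - k)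
      = (∑ k ∈ Finset.range (n + 1),
          ((p : A) ^ k * (qlift p (g (rootHom p R (n + 1) (x.coeff k)))) ^ p ^ (n + 1 - k)
            - (p : A) ^ k * (qlift p (g (rootHom p R n (x.coeff k)))) ^ p ^ (n - k)))
        + (p : A) ^ (n + 1) *
            (qlift p (g (rootHom p R (n + 1) (x.coeff (n + 1))))) ^ p ^ (n + 1 - (n + 1)) := by
    rw [Finset.sum_sub_distrib]; abel
  rw [heq]
  exact dvd_add (Finset.dvd_sum key) (dvd_mul_right _ _)

theorem cseq_chain (g : R →+* A ⧸ Ideal.span {(p : A)}) {m n : ℕ} (hmn : m ≤ n)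
    (x : WittVector p R) : (p : A) ^ (m + 1) ∣ cseq p g n x - cseq p g m x := by
  induction n, hmn using Nat.le_induction with
  | base => simp
  | succ n hmn ih =>
    have h1 : cseq p g (n + 1) x - cseq p g m x =
        (cseq p g (n + 1) x - cseq p g n x) + (cseq p g n x - cseq p g m x) := by ring
    rw [h1]
    exact dvd_add ((pow_dvd_pow _ (by omega)).trans (cseq_compat p g n x)) ih

end Cseq

section Adic

variable {A : Type*} [CommRing A]

theorem smod_iff (a b : A) (m : ℕ) :
    a ≡ b [SMOD ((Ideal.span {(p : A)}) ^ m • ⊤ : Submodule A A)] ↔ (p : A) ^ m ∣ a - b := by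
  rw [SModEq.sub_mem, smul_eq_mul, Ideal.mul_top, Ideal.span_singleton_pow,
    Ideal.mem_span_singleton]

theorem eq_of_dvd_all [IsHausdorff (Ideal.span {(p : A)}) A] (a b : A)
    (h : ∀ n, (p : A) ^ n ∣ a - b) : a = b := by
  have := IsHausdorff.haus (inferInstance : IsHausdorff (Ideal.span {(p : A)}) A) (a - b)
    (fun n => by rw [smod_iff]; simpa using h n)
  exact sub_eq_zero.mp this

end Adic

section Main

variable {R : Type*} [CommRing R] [CharP R p] [PerfectRing R p]
variable {A : Type*} [CommRing A] [IsAdicComplete (Ideal.span {(p : A)}) A]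

theorem exists_limit (g : R →+* A ⧸ Ideal.span {(p : A)}) (x : WittVector p R) :
    ∃ L : A, ∀ n, (p : A) ^ n ∣ cseq p g n x - L := by
  obtain ⟨L, hL⟩ := IsPrecomplete.prec (inferInstance : IsPrecomplete (Ideal.span {(p : A)}) A)
    (f := fun n => cseq p g n x) (fun {m n} hmn => by
      rw [smod_iff, ← neg_sub]
      exact dvd_neg.mpr ((pow_dvd_pow _ (Nat.le_succ m)).trans (cseq_chain p g hmn x)))
  exact ⟨L, fun n => by have := hL n; rw [smod_iff] at this; exact this⟩

/-- the limit function -/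
noncomputable def Ffun (g : R →+* A ⧸ Ideal.span {(p : A)}) (x : WittVector p R) : A :=
  Classical.choose (exists_limit p g x)

theorem Ffun_spec (g : R →+* A ⧸ Ideal.span {(p : A)}) (x : WittVector p R) (n : ℕ) :
    (p : A) ^ n ∣ cseq p g n x - Ffun p g x :=
  Classical.choose_spec (exists_limit p g x) n

/-- the lifted ring hom -/
noncomputable def Fhom (g : R →+* A ⧸ Ideal.span {(p : A)}) : WittVector p R →+* A where
  toFun := Ffun p g
  map_one' := by
    refine eq_of_dvd_all p _ _ fun n => ?_
    have h1 := Ffun_spec p g 1 n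
    have h2 := (pow_dvd_pow (p : A) (Nat.le_succ n)).trans (cseq_one p g n)
    have : Ffun p g 1 - 1 = -(cseq p g n 1 - Ffun p g 1) + (cseq p g n 1 - 1) := by ring
    rw [this]
    exact dvd_add (dvd_neg.mpr h1) h2
  map_mul' := fun x y => by
    refine eq_of_dvd_all p _ _ fun n => ?_
    have h1 := Ffun_spec p g (x * y) n
    have h2 := (pow_dvd_pow (p : A) (Nat.le_succ n)).trans (cseq_mul p g n x y)
    have h3 := Ffun_spec p g x n
    have h4 := Ffun_spec p g y n
    have key : Ffun p g (x * y) - Ffun p g x * Ffun p g y =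
        -(cseq p g n (x * y) - Ffun p g (x * y))
        + (cseq p g n (x * y) - cseq p g n x * cseq p g n y)
        + ((cseq p g n x - Ffun p g x) * cseq p g n y
          + Ffun p g x * (cseq p g n y - Ffun p g y)) := by ring
    rw [key]
    exact dvd_add (dvd_add (dvd_neg.mpr h1) h2)
      (dvd_add (h3.mul_right _) (h4.mul_left _))
  map_zero' := by
    refine eq_of_dvd_all p _ _ fun n => ?_
    have h1 := Ffun_spec p g 0 n
    have h2 : (p : A) ^ n ∣ cseq p g n 0 - 0 := by
      have := (pow_dvd_pow (p : A) (Nat.le_succ n)).trans (cseq_add p g n 0 0)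
      simpa using this
    have : Ffun p g 0 - 0 = -(cseq p g n 0 - Ffun p g 0) + (cseq p g n 0 - 0) := by ring
    rw [this]
    exact dvd_add (dvd_neg.mpr h1) h2
  map_add' := fun x y => by
    refine eq_of_dvd_all p _ _ fun n => ?_
    have h1 := Ffun_spec p g (x + y) n
    have h2 := (pow_dvd_pow (p : A) (Nat.le_succ n)).trans (cseq_add p g n x y)
    have h3 := Ffun_spec p g x n
    have h4 := Ffun_spec p g y n
    have key : Ffun p g (x + y) - (Ffun p g x + Ffun p g y) =
        -(cseq p g n (x + y) - Ffun p g (x + y))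
        + (cseq p g n (x + y) - (cseq p g n x + cseq p g n y))
        + ((cseq p g n x - Ffun p g x) + (cseq p g n y - Ffun p g y)) := by ring
    rw [key]
    exact dvd_add (dvd_add (dvd_neg.mpr h1) h2) (dvd_add h3 h4)

theorem Fhom_teichmuller (g : R →+* A ⧸ Ideal.span {(p : A)}) (r : R) :
    Ideal.Quotient.mk (Ideal.span {(p : A)}) (Fhom p g (teichmuller p r)) = g r := by
  have h1 : (p : A) ∣ cseq p g 1 (teichmuller p r) - Fhom p g (teichmuller p r) := by
    exact (by simpa using Ffun_spec p g (teichmuller p r) 1 :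
      (p : A) ∣ cseq p g 1 (teichmuller p r) - Ffun p g (teichmuller p r))
  have h2 : Ideal.Quotient.mk (Ideal.span {(p : A)}) (Fhom p g (teichmuller p r)) =
      Ideal.Quotient.mk (Ideal.span {(p : A)}) (cseq p g 1 (teichmuller p r)) := by
    rw [mk_eq_mk_iff, ← neg_sub]
    exact dvd_neg.mpr h1
  rw [h2, cseq_eq_sum]
  have e : ∑ k ∈ Finset.range 2,
        (p : A) ^ k * (qlift p (g (rootHom p R 1 ((teichmuller p r).coeff k)))) ^ p ^ (1 - k)
      = (qlift p (g (rootHom p R 1 r))) ^ p + (p : A) * qlift p (g (rootHom p R 1 0)) := by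
    rw [Finset.sum_range_succ, Finset.sum_range_one]
    norm_num [teichmuller_coeff_zero, teichmuller_coeff_pos p r 1 one_pos]
  rw [e, _root_.map_add, _root_.map_mul, _root_.map_pow, mk_qlift]
  have hp0 : Ideal.Quotient.mk (Ideal.span {(p : A)}) ((p : A)) = 0 := by
    rw [Ideal.Quotient.eq_zero_iff_mem]
    exact Ideal.mem_span_singleton_self _
  rw [hp0, zero_mul, add_zero, ← _root_.map_pow, rootHom_succ_pow, rootHom_zero]

theorem ghostComponent_zero_eq {S : Type*} [CommRing S] (x : WittVector p S) :
    ghostComponent 0 x = x.coeff 0 := by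
  rw [ghostComponent_apply, wittPolynomial_zero, MvPolynomial.aeval_X]

theorem exists_decomp (x : WittVector p R) :
    ∃ z : WittVector p R, x = teichmuller p (x.coeff 0) + z * p := by
  set y := x - teichmuller p (x.coeff 0) with hy
  have hy0 : y.coeff 0 = 0 := by
    rw [← ghostComponent_zero_eq, hy, _root_.map_sub, ghostComponent_zero_eq,
      ghostComponent_zero_eq, teichmuller_coeff_zero, sub_self]
  set z' := WittVector.mk p (fun n => y.coeff (n + 1)) with hz'
  have hVz' : verschiebung z' = y := by
    apply WittVector.ext
    intro n
    cases n with
    | zero => rw [verschiebung_coeff_zero, hy0]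
    | succ n => rw [verschiebung_coeff_succ, hz', WittVector.coeff_mk]
  set w := (WittVector.frobeniusEquiv p R).symm z' with hw
  have hfw : WittVector.frobenius w = z' := by
    have := (WittVector.frobeniusEquiv p R).apply_symm_apply z'
    rwa [WittVector.frobeniusEquiv_apply] at this
  refine ⟨w, ?_⟩
  have : verschiebung (WittVector.frobenius w) = w * p := verschiebung_frobenius w
  rw [hfw, hVz'] at this
  rw [← this, hy]
  ring

theorem teich_dvd_sub (f₁ f₂ : WittVector p R →+* A)
    (h : ∀ r, Ideal.Quotient.mk (Ideal.span {(p : A)}) (f₁ (teichmuller p r)) =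
      Ideal.Quotient.mk (Ideal.span {(p : A)}) (f₂ (teichmuller p r)))
    (n : ℕ) (r : R) : (p : A) ^ (n + 1) ∣ f₁ (teichmuller p r) - f₂ (teichmuller p r) := by
  have hr : teichmuller p r = (teichmuller p (rootHom p R n r)) ^ p ^ n := by
    rw [← map_pow, rootHom_pow]
  rw [hr, map_pow, map_pow]
  refine dvd_sub_pow_of_dvd_sub ?_ n
  rw [← mk_eq_mk_iff]
  exact h _

theorem hom_unique (f₁ f₂ : WittVector p R →+* A)
    (h : ∀ r, Ideal.Quotient.mk (Ideal.span {(p : A)}) (f₁ (teichmuller p r)) =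
      Ideal.Quotient.mk (Ideal.span {(p : A)}) (f₂ (teichmuller p r))) :
    f₁ = f₂ := by
  have key : ∀ n : ℕ, ∀ x : WittVector p R, (p : A) ^ n ∣ f₁ x - f₂ x := by
    intro n
    induction n with
    | zero => intro x; simp
    | succ n ih =>
      intro x
      obtain ⟨z, hz⟩ := exists_decomp p x
      have e1 : f₁ x - f₂ x = (f₁ (teichmuller p (x.coeff 0)) - f₂ (teichmuller p (x.coeff 0)))
          + (f₁ z - f₂ z) * (p : A) := by
        conv_lhs => rw [hz]
        simp only [_root_.map_add, _root_.map_mul, map_natCast]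
        ring
      rw [e1]
      refine dvd_add (teich_dvd_sub p f₁ f₂ h n _) ?_
      rw [pow_succ]
      exact mul_dvd_mul (ih z) dvd_rfl
  ext x
  exact eq_of_dvd_all p _ _ fun n => key n x

/-- part (i): the induced map on residue rings is a ring hom -/
noncomputable def gOf (f : WittVector p R →+* A) : R →+* A ⧸ Ideal.span {(p : A)} where
  toFun r := Ideal.Quotient.mk (Ideal.span {(p : A)}) (f (teichmuller p r))
  map_one' := by rw [_root_.map_one (teichmuller p), _root_.map_one, _root_.map_one]
  map_mul' r s := by
    rw [_root_.map_mul (teichmuller p), _root_.map_mul, _root_.map_mul]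
  map_zero' := by rw [teichmuller_zero, _root_.map_zero, _root_.map_zero]
  map_add' r s := by
    have hy0 : (teichmuller p (r + s) - teichmuller p r - teichmuller p s).coeff 0 = 0 := by
      rw [← ghostComponent_zero_eq, _root_.map_sub, _root_.map_sub,
        ghostComponent_zero_eq, ghostComponent_zero_eq, ghostComponent_zero_eq,
        teichmuller_coeff_zero, teichmuller_coeff_zero, teichmuller_coeff_zero]
      ring
    obtain ⟨z, hz⟩ := exists_decomp p (teichmuller p (r + s) - teichmuller p r - teichmuller p s)
    rw [hy0, teichmuller_zero, zero_add] at hz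
    have hf : f (teichmuller p (r + s)) =
        f (teichmuller p r) + f (teichmuller p s) + f z * (p : A) := by
      have h2 := congrArg f hz
      rw [_root_.map_sub, _root_.map_sub, _root_.map_mul, map_natCast] at h2
      linear_combination h2
    rw [hf, _root_.map_add, _root_.map_add, _root_.map_mul, map_natCast]
    have hp0 : ((p : ℕ) : A ⧸ Ideal.span {(p : A)}) = 0 := by
      rw [← _root_.map_natCast (Ideal.Quotient.mk (Ideal.span {(p : A)})),
        Ideal.Quotient.eq_zero_iff_mem]
      exact Ideal.mem_span_singleton_self _
    rw [hp0, mul_zero, add_zero]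

end Main

end Stmt8Aux

theorem stmt8 (p : ℕ) [Fact p.Prime]
    (R : Type*) [CommRing R] [CharP R p] [PerfectRing R p]
    (A : Type*) [CommRing A] [IsAdicComplete (Ideal.span {(p : A)}) A] :
    (∀ f : WittVector p R →+* A,
        ∃ g : R →+* A ⧸ Ideal.span {(p : A)},
          ∀ r : R,
            g r = Ideal.Quotient.mk (Ideal.span {(p : A)}) (f (WittVector.teichmuller p r))) ∧
      ∀ g : R →+* A ⧸ Ideal.span {(p : A)},
        ∃! f : WittVector p R →+* A,
          ∀ r : R,
            Ideal.Quotient.mk (Ideal.span {(p : A)}) (f (WittVector.teichmuller p r)) = g r := by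
  constructor
  · intro f
    exact ⟨Stmt8Aux.gOf p f, fun r => rfl⟩
  · intro g
    refine ⟨Stmt8Aux.Fhom p g, fun r => Stmt8Aux.Fhom_teichmuller p g r, fun f' hf' => ?_⟩
    exact Stmt8Aux.hom_unique p f' (Stmt8Aux.Fhom p g)
      (fun r => by rw [hf' r, Stmt8Aux.Fhom_teichmuller])
end

section
/- Let p be a prime, let R be a perfect 𝔽_p-algebra, and let A be a commutative ring that is p-adically complete. Then there is a natural bijection between the set of ring homomorphisms W(R) → A and the set of ring homomorphisms R → (A/(p))^♭, where (A/(p))^♭ = Ring.Perfection (A/(p)) p is the inverse limit perfection (tilt) of A/(p); explicitly, composing with the canonical projection (A/(p))^♭ → A/(p) (the 0-th component of the inverse limit) gives a bijection from ring homomorphisms R → (A/(p))^♭ to ring homomorphisms R → A/(p), which in turn correspond bijectively to ring homomorphisms W(R) → A via f ↦ (r ↦ f(τ(r)) mod (p)). -/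
/-!
Since `R` is perfect, a ring map `g : R → A/(p)` lifts uniquely to `g♭ : R → (A/(p))^♭`.
Fontaine's `θ` composed with `W(g♭)` sends `τ(r)` to the Teichmüller lift of `g♭(r)`, which
reduces to `g(r)` mod `p`. Conversely, if `f : W(R) → A` satisfies `f(τ r) ≡ g(r)`, then
`r ↦ f(τ r)` is a multiplicative lift of `g`; as `f(τ r) = f(τ(r^{1/p^n}))^{p^n}` and
`a ≡ b mod p` implies `a^{p^n} ≡ b^{p^n} mod p^{n+1}`, it must be the Teichmüller lift
of `g♭`. Finally, `p` being nilpotent in `A/(p^n)`, a ring map `W(R) → A/(p^n)` is determined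
by its values on Teichmüller representatives; as `A` is `p`-adically separated, so is a ring map
`W(R) → A`.
-/

open Ideal WittVector

section

variable {p : ℕ} [Fact p.Prime]

theorem not_isUnit_natCast_of_charP_quotient {A : Type*} [CommRing A]
    [CharP (A ⧸ span {(p : A)}) p] : ¬IsUnit (p : A) := by
  have : Nontrivial (A ⧸ span {(p : A)}) :=
    CharP.nontrivial_of_char_ne_one (Fact.out : p.Prime).one_lt.ne'
  rw [← span_singleton_eq_top]
  exact Ideal.Quotient.nontrivial_iff.mp this

theorem WittVector.ringHom_ext_of_isHausdorff {R A : Type*} [CommRing R] [CharP R p]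
    [PerfectRing R p] [CommRing A] {I : Ideal A} [IsHausdorff I A] (hpI : (p : A) ∈ I)
    {f f' : WittVector p R →+* A} (h : ∀ r, f (teichmuller p r) = f' (teichmuller p r)) :
    f = f' := by
  refine DFunLike.coe_injective (IsHausdorff.funext' I fun n x => ?_)
  have hnil : IsNilpotent (p : A ⧸ I ^ n) :=
    ⟨n, by rw [← map_natCast (Ideal.Quotient.mk _), ← map_pow, Ideal.Quotient.eq_zero_iff_mem]
           exact pow_mem_pow hpI n⟩
  exact RingHom.congr_fun (eq_of_apply_teichmuller_eq ((Ideal.Quotient.mk _).comp f)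
    ((Ideal.Quotient.mk _).comp f') hnil fun r => congrArg (Ideal.Quotient.mk _) (h r)) x

theorem Perfection.teichmuller_lift_apply {R A : Type*} [CommRing R] [CharP R p]
    [PerfectRing R p] [CommRing A] {I : Ideal A} [CharP (A ⧸ I) p] [IsAdicComplete I A]
    (f : R →* A) (g : R →+* A ⧸ I) (hfg : ∀ r, Ideal.Quotient.mk I (f r) = g r) (r : R) :
    teichmuller p I (lift p R (A ⧸ I) g r) = f r := by
  refine teichmuller_spec fun n => ⟨f ((frobeniusEquiv R p).symm^[n] r), hfg _, ?_⟩
  rw [← map_pow, iterate_frobeniusEquiv_symm_pow_p_pow]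

end

theorem stmt10 (p : ℕ) [Fact p.Prime]
    (R : Type*) [CommRing R] [CharP R p] [PerfectRing R p]
    (A : Type*) [CommRing A] [IsAdicComplete (Ideal.span {(p : A)}) A]
    [CharP (A ⧸ Ideal.span {(p : A)}) p] :
    Function.Bijective
        (fun g : R →+* Perfection (A ⧸ Ideal.span {(p : A)}) p =>
          (Perfection.coeff (A ⧸ Ideal.span {(p : A)}) p 0).comp g) ∧
      ∀ g : R →+* A ⧸ Ideal.span {(p : A)},
        ∃! f : WittVector p R →+* A,
          ∀ r : R,
            Ideal.Quotient.mk (Ideal.span {(p : A)}) (f (WittVector.teichmuller p r)) = g r := by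
  have : Fact ¬IsUnit (p : A) := ⟨not_isUnit_natCast_of_charP_quotient⟩
  refine ⟨(Perfection.lift p R _).symm.bijective, fun g => ?_⟩
  let gTilt : R →+* PreTilt A p := Perfection.lift p R _ g
  let θ : WittVector p R →+* A := (fontaineTheta A p).comp (WittVector.map gTilt)
  have hθ (r : R) : θ (teichmuller p r) = (gTilt r).untilt := by
    rw [RingHom.comp_apply, map_teichmuller, fontaineTheta_teichmuller]
  refine ⟨θ, fun r => by rw [hθ, PreTilt.mk_untilt_eq_coeff_zero]; rfl, fun f hf => ?_⟩
  refine ringHom_ext_of_isHausdorff (mem_span_singleton_self _) fun r => ?_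
  rw [hθ]
  exact (Perfection.teichmuller_lift_apply
    ((f : WittVector p R →* A).comp (teichmuller p)) g hf r).symm
end

section
/- Let p be a prime and let R be a perfect 𝔽_p-algebra. Let q : Ã → A be a surjective ring homomorphism of commutative rings such that both Ã and A are p-adically complete and the kernel of q is square-zero, i.e. (ker q)² = 0. Then every ring homomorphism f : W(R) → A lifts uniquely along q: there exists a unique ring homomorphism f̃ : W(R) → Ã with q ∘ f̃ = f. -/
/-!
For a `p`-adically complete ring `S`, ring maps `W(R) → S` correspond bijectively to ring maps
`R → S/p`, via reduction mod `p` and `W(R)/p ≅ R`. Injectivity: `[r] = [r^{1/p^n}]^{p^n}`, and a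
congruence mod `p` becomes a congruence mod `p^{n+1}` after raising to the `p^n`-th power.
Surjectivity: as for Fontaine's `θ`, the maps `W(R) → W(R) → W(S/p) → S/p^{n+1}` given by
`φ^{-n}`, `W(g)` and the `n`-th ghost component are compatible, and their limit reduces to `g`.

This turns the lifting problem along `q` into lifting `R → A/p` along `Ã/p → A/p`. The kernel
of the latter is killed by Frobenius, so `x ↦ (any preimage of x)^p` is a ring map
`ψ : A/p → Ã/p`, and since `R` is perfect, `ψ ∘ g ∘ φ⁻¹` is the unique lift of `g`.
-/

open Function Ideal

section

variable {p : ℕ}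

lemma span_natCast_le_comap {S T : Type*} [CommRing S] [CommRing T] (f : S →+* T) :
    span {(p : S)} ≤ (span {(p : T)}).comap f := by
  rw [span_le, Set.singleton_subset_iff, SetLike.mem_coe, mem_comap, map_natCast]
  exact mem_span_singleton_self _

lemma isNilpotent_natCast_quotient_span_pow (S : Type*) [CommRing S] (n : ℕ) :
    IsNilpotent (p : S ⧸ span {(p : S)} ^ n) :=
  ⟨n, by
    rw [← map_natCast (Ideal.Quotient.mk _), ← map_pow, Ideal.Quotient.eq_zero_iff_mem]
    exact pow_mem_pow (mem_span_singleton_self _) n⟩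

variable [hp : Fact p.Prime]

lemma pow_eq_zero_of_quotientMap_eq_zero {S T : Type*} [CommRing S] [CommRing T] (q : S →+* T)
    (hq : Surjective q) (hker : RingHom.ker q ^ 2 = ⊥) {b : S ⧸ span {(p : S)}}
    (hb : quotientMap _ q (span_natCast_le_comap q) b = 0) : b ^ p = 0 := by
  obtain ⟨a, rfl⟩ := Ideal.Quotient.mk_surjective b
  rw [quotientMap_mk, Ideal.Quotient.eq_zero_iff_mem, mem_span_singleton'] at hb
  obtain ⟨c, hc⟩ := hb
  obtain ⟨c, rfl⟩ := hq c
  have hκ : a - c * p ∈ RingHom.ker q := by simp [RingHom.mem_ker, hc]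
  have hsq : (a - c * p) ^ 2 = 0 := by
    rw [← Ideal.mem_bot, ← hker]
    exact pow_mem_pow hκ 2
  have hmk : Ideal.Quotient.mk (span {(p : S)}) a = Ideal.Quotient.mk _ (a - c * p) := by
    rw [Ideal.Quotient.eq, sub_sub_cancel]
    exact mem_span_singleton'.mpr ⟨c, rfl⟩
  rw [hmk, ← map_pow, pow_eq_zero_of_le hp.out.two_le hsq, map_zero]

/-- Unlike `frobenius`, this needs no `CharP` instance, which the zero ring lacks
(and `Ã ⧸ p` may be zero). -/
def frobeniusOfNatCastEqZero (B : Type*) [CommRing B] (hB : (p : B) = 0) : B →+* B where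
  toFun b := b ^ p
  map_one' := one_pow p
  map_mul' x y := mul_pow x y p
  map_zero' := zero_pow hp.out.ne_zero
  map_add' x y := by simp [add_pow_prime_eq hp.out, hB]

section PerfectRing

variable {R : Type*} [CommRing R] [CharP R p] [PerfectRing R p]

lemma frobeniusEquiv_symm_pow_succ_apply_pow (n : ℕ) (r : R) :
    ((frobeniusEquiv R p).symm ^ (n + 1)) r ^ p = ((frobeniusEquiv R p).symm ^ n) r := by
  rw [pow_succ', RingAut.mul_apply, frobeniusEquiv_symm_pow_p]

lemma frobeniusEquiv_symm_pow_apply_pow_pow (n : ℕ) (r : R) :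
    ((frobeniusEquiv R p).symm ^ n) r ^ p ^ n = r := by
  rw [RingAut.coe_pow]
  exact iterate_frobeniusEquiv_symm_pow_p_pow R p r n

theorem existsUnique_ringHom_comp_eq_of_perfectRing {B C : Type*} [CommRing B] [CommRing C]
    (hB : (p : B) = 0) (π : B →+* C) (hπ : Surjective π) (hker : ∀ b, π b = 0 → b ^ p = 0)
    (g : R →+* C) : ∃! g' : R →+* B, π.comp g' = g := by
  let ψ : C →+* B := π.liftOfSurjective hπ
    ⟨frobeniusOfNatCastEqZero B hB, fun b hb => hker b (RingHom.mem_ker.mp hb)⟩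
  have hψ (b : B) : ψ (π b) = b ^ p := π.liftOfSurjective_comp_apply hπ _ b
  let φ : R →+* R := (frobeniusEquiv R p).symm
  refine ⟨ψ.comp (g.comp φ), ?_, fun g' hg' => ?_⟩
  · ext r
    obtain ⟨b, hb⟩ := hπ (g (φ r))
    change π (ψ (g (φ r))) = g r
    rw [← hb, hψ, map_pow, hb, ← map_pow, RingEquiv.coe_toRingHom, frobeniusEquiv_symm_pow_p]
  · ext r
    have hroot : g' r = g' (φ r) ^ p := by
      rw [← map_pow, RingEquiv.coe_toRingHom, frobeniusEquiv_symm_pow_p]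
    rw [hroot, ← hψ, ← RingHom.comp_apply π, hg']
    rfl

end PerfectRing

namespace WittVector

variable {R : Type*} [CommRing R] [CharP R p] [PerfectRing R p] {S : Type*} [CommRing S]

local notation "𝕎" => WittVector p

noncomputable def reduceModP (F : 𝕎 R →+* S) : R →+* S ⧸ span {(p : S)} :=
  (quotientMap _ F (span_natCast_le_comap F)).comp (quotientPEquiv (p := p) (k := R)).symm.toRingHom

lemma reduceModP_coeff_zero (F : 𝕎 R →+* S) (x : 𝕎 R) :
    reduceModP F (x.coeff 0) = Ideal.Quotient.mk _ (F x) := by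
  have hx : (quotientPEquiv (p := p) (k := R)).symm (x.coeff 0) = Ideal.Quotient.mk _ x := by
    rw [RingEquiv.symm_apply_eq]; rfl
  simp [reduceModP, hx]

lemma reduceModP_teichmuller (F : 𝕎 R →+* S) (r : R) :
    reduceModP F r = Ideal.Quotient.mk _ (F (teichmuller p r)) := by
  rw [← reduceModP_coeff_zero, teichmuller_coeff_zero]

lemma reduceModP_comp {T : Type*} [CommRing T] (q : S →+* T) (F : 𝕎 R →+* S) :
    reduceModP (q.comp F) = (quotientMap _ q (span_natCast_le_comap q)).comp (reduceModP F) := by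
  ext r
  simp [reduceModP_teichmuller]

theorem eq_of_apply_teichmuller_eq_of_isHausdorff [IsHausdorff (span {(p : S)}) S]
    {F G : 𝕎 R →+* S}
    (h : ∀ r, F (teichmuller p r) = G (teichmuller p r)) : F = G :=
  DFunLike.coe_injective <| IsHausdorff.funext' _ fun n x => by
    rw [← RingHom.comp_apply (Ideal.Quotient.mk (span {(p : S)} ^ n)),
      ← RingHom.comp_apply (Ideal.Quotient.mk _),
      eq_of_apply_teichmuller_eq ((Ideal.Quotient.mk _).comp F) ((Ideal.Quotient.mk _).comp G)
        (isNilpotent_natCast_quotient_span_pow S n) (by simp [h])]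

theorem reduceModP_injective [IsHausdorff (span {(p : S)}) S] :
    Injective (reduceModP : (𝕎 R →+* S) → R →+* S ⧸ span {(p : S)}) := by
  intro F G hFG
  refine eq_of_apply_teichmuller_eq_of_isHausdorff fun r =>
    (IsHausdorff.eq_iff_smodEq (I := span {(p : S)})).mpr fun n => ?_
  rw [SModEq.sub_mem, smul_eq_mul, mul_top, span_singleton_pow, mem_span_singleton]
  let s := ((_root_.frobeniusEquiv R p).symm ^ n) r
  have hs : teichmuller p r = teichmuller p s ^ p ^ n := by
    rw [← map_pow, frobeniusEquiv_symm_pow_apply_pow_pow]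
  have hp_dvd : (p : S) ∣ F (teichmuller p s) - G (teichmuller p s) := by
    rw [← mem_span_singleton, ← Ideal.Quotient.eq, ← reduceModP_teichmuller,
      ← reduceModP_teichmuller, hFG]
  rw [hs, map_pow, map_pow]
  exact (pow_dvd_pow _ n.le_succ).trans (dvd_sub_pow_of_dvd_sub hp_dvd n)

section Lift

variable (g : R →+* S ⧸ span {(p : S)})

noncomputable def liftModPPow (n : ℕ) : 𝕎 R →+* S ⧸ span {(p : S)} ^ (n + 1) :=
  (ghostComponentModPPow n).comp
    ((map g).comp (map (((_root_.frobeniusEquiv R p).symm ^ n : R ≃+* R) : R →+* R)))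

lemma liftModPPow_teichmuller (n : ℕ) (r : R) (y : S)
    (hy : Ideal.Quotient.mk _ y = g (((_root_.frobeniusEquiv R p).symm ^ n) r)) :
    liftModPPow g n (teichmuller p r) = Ideal.Quotient.mk _ (y ^ p ^ n) := by
  simp only [liftModPPow, RingHom.comp_apply, map_teichmuller, RingEquiv.coe_toRingHom]
  rw [← hy, ← map_teichmuller, ghostComponentModPPow_map_mk, ghostComponent_teichmuller]

lemma factorPowSucc_comp_liftModPPow (n : ℕ) :
    (Ideal.Quotient.factorPowSucc _ (n + 1)).comp (liftModPPow g (n + 1)) = liftModPPow g n := by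
  refine eq_of_apply_teichmuller_eq _ _ (isNilpotent_natCast_quotient_span_pow S _) fun r => ?_
  obtain ⟨y, hy⟩ :=
    Ideal.Quotient.mk_surjective (g (((_root_.frobeniusEquiv R p).symm ^ (n + 1)) r))
  have hyp : Ideal.Quotient.mk _ (y ^ p) = g (((_root_.frobeniusEquiv R p).symm ^ n) r) := by
    rw [map_pow, hy, ← map_pow, frobeniusEquiv_symm_pow_succ_apply_pow]
  rw [RingHom.comp_apply, liftModPPow_teichmuller g _ r y hy, liftModPPow_teichmuller g _ r _ hyp,
    ← pow_mul, ← pow_succ']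
  rfl

variable [IsAdicComplete (span {(p : S)}) S]

noncomputable def liftModP : 𝕎 R →+* S :=
  IsAdicComplete.StrictMono.liftRingHom (span {(p : S)}) Order.succ_strictMono (liftModPPow g)
    (factorPowSucc_comp_liftModPPow g _)

lemma mk_liftModP (n : ℕ) (x : 𝕎 R) :
    Ideal.Quotient.mk (span {(p : S)} ^ (n + 1)) (liftModP g x) = liftModPPow g n x :=
  IsAdicComplete.StrictMono.mk_liftRingHom (span {(p : S)}) Order.succ_strictMono (liftModPPow g)
    (factorPowSucc_comp_liftModPPow g _) x

lemma reduceModP_liftModP : reduceModP (liftModP g) = g := by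
  ext r
  obtain ⟨y, hy⟩ := Ideal.Quotient.mk_surjective (g r)
  have h := mk_liftModP g 0 (teichmuller p r)
  rw [liftModPPow_teichmuller g 0 r y (by simpa using hy), Ideal.Quotient.eq] at h
  rw [reduceModP_teichmuller, ← hy, Ideal.Quotient.eq]
  simpa using h

theorem reduceModP_surjective :
    Surjective (reduceModP : (𝕎 R →+* S) → R →+* S ⧸ span {(p : S)}) :=
  fun g => ⟨liftModP g, reduceModP_liftModP g⟩

end Lift

end WittVector

end

theorem stmt11 (p : ℕ) [Fact p.Prime]
    (R : Type*) [CommRing R] [CharP R p] [PerfectRing R p]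
    (Atilde : Type*) [CommRing Atilde] [IsAdicComplete (Ideal.span {(p : Atilde)}) Atilde]
    (A : Type*) [CommRing A] [IsAdicComplete (Ideal.span {(p : A)}) A]
    (q : Atilde →+* A) (hq : Function.Surjective q) (hker : RingHom.ker q ^ 2 = ⊥) :
    ∀ f : WittVector p R →+* A, ∃! ftilde : WittVector p R →+* Atilde, q.comp ftilde = f := by
  intro f
  have hp_zero : (p : Atilde ⧸ span {(p : Atilde)}) = 0 := by
    rw [← map_natCast (Ideal.Quotient.mk _), Ideal.Quotient.eq_zero_iff_mem]
    exact mem_span_singleton_self _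
  obtain ⟨g, hg, hg_unique⟩ := existsUnique_ringHom_comp_eq_of_perfectRing hp_zero _
    (quotientMap_surjective hq) (fun _ hb => pow_eq_zero_of_quotientMap_eq_zero q hq hker hb)
    (WittVector.reduceModP f)
  obtain ⟨F, rfl⟩ := WittVector.reduceModP_surjective g
  refine ⟨F, WittVector.reduceModP_injective ?_, fun F' hF' => WittVector.reduceModP_injective
    (hg_unique _ ((WittVector.reduceModP_comp q F').symm.trans (congrArg _ hF')))⟩
  rw [WittVector.reduceModP_comp, hg]
end

section
/- Let p be a prime and let R be a perfect 𝔽_p-algebra. Let q : S → S' be a surjective homomorphism of commutative rings of characteristic p whose kernel is square-zero, i.e. (ker q)² = 0. Then every ring homomorphism f : R → S' lifts uniquely along q: there exists a unique ring homomorphism f̃ : R → S with q ∘ f̃ = f. (Perfect 𝔽_p-algebras are formally étale over 𝔽_p.) -/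
theorem stmt12 (p : ℕ) [Fact p.Prime]
    (R : Type*) [CommRing R] [CharP R p] [PerfectRing R p]
    (S : Type*) [CommRing S] [CharP S p]
    (S' : Type*) [CommRing S'] [CharP S' p]
    (q : S →+* S') (hq : Function.Surjective q) (hker : RingHom.ker q ^ 2 = ⊥) :
    ∀ f : R →+* S', ∃! ftilde : R →+* S, q.comp ftilde = f := by
  have hp : p.Prime := Fact.out
  -- key: if q a = q b then a^p = b^p
  have key : ∀ a b : S, q a = q b → a ^ p = b ^ p := by
    intro a b h
    have hk : a - b ∈ RingHom.ker q := by
      simp [RingHom.mem_ker, map_sub, h]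
    have hk2 : (a - b) ^ 2 = 0 := by
      have : (a - b) ^ 2 ∈ RingHom.ker q ^ 2 := by
        rw [pow_two, pow_two]; exact Ideal.mul_mem_mul hk hk
      rwa [hker, Ideal.mem_bot] at this
    have : a ^ p = (b + (a - b)) ^ p := by ring_nf
    rw [this, add_pow_char]
    have : (a - b) ^ p = 0 := by
      have h2 : 2 ≤ p := hp.two_le
      calc (a - b) ^ p = (a - b) ^ 2 * (a - b) ^ (p - 2) := by
            rw [← pow_add]; congr 1; omega
        _ = 0 := by rw [hk2, zero_mul]
    rw [this, add_zero]
  intro f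
  let σ := (frobeniusEquiv R p).symm
  let g : R → S := fun x => Classical.choose (hq (f (σ x)))
  have hg : ∀ x, q (g x) = f (σ x) := fun x => Classical.choose_spec (hq (f (σ x)))
  let F : R →+* S :=
    { toFun := fun x => g x ^ p
      map_one' := by
        show g 1 ^ p = 1
        have : q (g 1) = q 1 := by rw [hg, map_one, map_one, map_one]
        rw [key _ _ this, one_pow]
      map_mul' := by
        intro x y
        have : q (g (x * y)) = q (g x * g y) := by
          simp [hg, map_mul]
        show g (x * y) ^ p = g x ^ p * g y ^ p
        rw [key _ _ this, mul_pow]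
      map_zero' := by
        show g 0 ^ p = 0
        have : q (g 0) = q 0 := by rw [hg, map_zero, map_zero, map_zero]
        rw [key _ _ this, zero_pow hp.ne_zero]
      map_add' := by
        intro x y
        have : q (g (x + y)) = q (g x + g y) := by
          simp [hg, map_add]
        show g (x + y) ^ p = g x ^ p + g y ^ p
        rw [key _ _ this, add_pow_char] }
  have hσp : ∀ x : R, σ x ^ p = x := by
    intro x
    have := frobenius_apply_frobeniusEquiv_symm R p x
    rwa [frobenius_def] at this
  refine ⟨F, ?_, ?_⟩
  · ext x
    show q (g x ^ p) = f x
    rw [map_pow, hg, ← map_pow, hσp]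
  · intro h hh
    ext x
    have h1 : h x = h (σ x) ^ p := by rw [← map_pow, hσp]
    have h2 : q (h (σ x)) = q (g x) := by
      rw [hg]
      have := congrArg (fun φ : R →+* S' => φ (σ x)) hh
      simpa using this
    show h x = g x ^ p
    rw [h1, key _ _ h2]
end

section
/- Let p be a prime and let R be a perfect 𝔽_p-algebra. Let ι : ℤ[R] → W(R) be the ring homomorphism from the monoid algebra of the multiplicative monoid (R,·) determined by ι([r]) = τ(r) for all r ∈ R. Let M and N be modules over W(R), each of which is p-adically complete as a W(R)-module (IsAdicComplete with respect to the ideal (p) of W(R)). Then every additive map g : M → N that is ℤ[R]-linear for the module structures restricted along ι — equivalently, every additive g satisfying g(τ(r) • m) = τ(r) • g(m) for all r ∈ R and m ∈ M — is automatically W(R)-linear. In other words, the restriction map Hom_{W(R)}(M, N) → Hom_{ℤ[R]}(M, N) is bijective. -/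
open WittVector

private lemma coeff_zero_ghost {p : ℕ} [Fact p.Prime] {R : Type*} [CommRing R]
    (x : WittVector p R) : ghostComponent 0 x = x.coeff 0 := by
  simp [ghostComponent_apply, wittPolynomial_zero]

private lemma exists_p_mul {p : ℕ} [Fact p.Prime] {R : Type*} [CommRing R] [CharP R p]
    [PerfectRing R p] (x : WittVector p R) :
    ∃ y, x = teichmuller p (x.coeff 0) + p * y := by
  set z := x - teichmuller p (x.coeff 0) with hz
  have h0 : z.coeff 0 = 0 := by
    have := map_sub (ghostComponent (p := p) 0) x (teichmuller p (x.coeff 0))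
    rw [coeff_zero_ghost, coeff_zero_ghost, coeff_zero_ghost, teichmuller_coeff_zero,
      sub_self] at this
    exact this
  have hv : z = verschiebung (z.shift 1) := by
    have := eq_iterate_verschiebung (x := z) (n := 1) (by
      intro i hi
      interval_cases i
      exact h0)
    simpa using this
  refine ⟨(frobeniusEquiv p R).symm (z.shift 1), ?_⟩
  have hzw : z = (frobeniusEquiv p R).symm (z.shift 1) * p := by
    nth_rewrite 1 [hv]
    rw [← verschiebung_frobenius ((frobeniusEquiv p R).symm (z.shift 1))]
    congr 1
    exact ((frobeniusEquiv p R).apply_symm_apply (z.shift 1)).symm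
  rw [mul_comm (p : WittVector p R), ← hzw, hz]
  ring

private lemma exists_approx {p : ℕ} [Fact p.Prime] {R : Type*} [CommRing R] [CharP R p]
    [PerfectRing R p] (k : ℕ) (x : WittVector p R) :
    ∃ a ∈ Subring.closure (Set.range (teichmuller p : R → WittVector p R)),
      ∃ y, x = a + (p : WittVector p R) ^ k * y := by
  induction k generalizing x with
  | zero => exact ⟨0, Subring.zero_mem _, x, by simp⟩
  | succ k ih =>
    obtain ⟨d, hd⟩ := exists_p_mul x
    obtain ⟨a, ha, y, hy⟩ := ih d
    refine ⟨teichmuller p (x.coeff 0) + (p : WittVector p R) * a, ?_, y, ?_⟩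
    · exact Subring.add_mem _ (Subring.subset_closure ⟨_, rfl⟩)
        (Subring.mul_mem _ (natCast_mem _ p) ha)
    · conv_lhs => rw [hd, hy]
      ring

theorem stmt13 (p : ℕ) [Fact p.Prime]
    (R : Type*) [CommRing R] [CharP R p] [PerfectRing R p]
    (M : Type*) [AddCommGroup M] [Module (WittVector p R) M]
    [IsAdicComplete (Ideal.span {(p : WittVector p R)}) M]
    (N : Type*) [AddCommGroup N] [Module (WittVector p R) N]
    [IsAdicComplete (Ideal.span {(p : WittVector p R)}) N]
    (g : M →+ N)
    (hg : ∀ (r : R) (m : M),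
      g (WittVector.teichmuller p r • m) = WittVector.teichmuller p r • g m) :
    ∀ (c : WittVector p R) (m : M), g (c • m) = c • g m := by
  have hS : ∀ a ∈ Subring.closure (Set.range (teichmuller p : R → WittVector p R)),
      ∀ m : M, g (a • m) = a • g m := by
    intro a ha
    induction ha using Subring.closure_induction with
    | mem x hx =>
      obtain ⟨r, rfl⟩ := hx
      exact hg r
    | zero => intro m; simp
    | one => intro m; simp
    | add x y hx hy px py => intro m; simp [add_smul, px, py]
    | neg x hx px => intro m; simp [neg_smul, px]
    | mul x y hx hy px py => intro m; rw [mul_smul, px, py, mul_smul]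
  intro c m
  have key : ∀ n : ℕ, g (c • m) - c • g m ∈
      (Ideal.span {(p : WittVector p R)}) ^ n • (⊤ : Submodule (WittVector p R) N) := by
    intro n
    obtain ⟨a, ha, y, hy⟩ := exists_approx n c
    have hcomm : ∀ (v : M), g (((p : WittVector p R) ^ n * y) • v)
        = (p : WittVector p R) ^ n • g (y • v) := by
      intro v
      rw [mul_smul]
      have hc : ((p : WittVector p R) ^ n) • (y • v)
          = ((p ^ n : ℕ) : WittVector p R) • (y • v) := by
        norm_cast
      rw [hc, Nat.cast_smul_eq_nsmul, map_nsmul, ← Nat.cast_smul_eq_nsmul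
        (R := WittVector p R), Nat.cast_pow]
    have heq : g (c • m) - c • g m
        = (p : WittVector p R) ^ n • (g (y • m) - y • g m) := by
      rw [hy, add_smul, add_smul, map_add, hS a ha, hcomm]
      rw [smul_sub]
      have hms : ((p : WittVector p R) ^ n * y) • g m
          = (p : WittVector p R) ^ n • (y • g m) := by
        rw [mul_smul]
      rw [hms]
      abel
    rw [heq, Ideal.span_singleton_pow]
    exact Submodule.smul_mem_smul (Ideal.subset_span rfl) Submodule.mem_top
  have h0 : g (c • m) - c • g m = 0 :=
    IsHausdorff.haus (IsAdicComplete.toIsHausdorff) _ (fun n => SModEq.zero.mpr (key n))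
  exact sub_eq_zero.mp h0
end

section
/- Let p be a prime and let R be a perfect 𝔽_p-algebra, and let ι : ℤ[R] → W(R) be the ring homomorphism with ι([r]) = τ(r). Let M be an abelian group that is p-adically complete (the natural map M → lim M/pⁿM is bijective). If M carries two W(R)-module structures whose restrictions along ι give the same ℤ[R]-module structure on M, then the two W(R)-module structures coincide. In other words, a p-adically complete ℤ[R]-module admits at most one W(R)-module structure extending its ℤ[R]-module structure along ι. -/
open WittVector

/-- Every Witt vector over a perfect `𝔽_p`-algebra is congruent mod `p^n` to the image of
an element of the monoid algebra under the Teichmüller lift homomorphism. -/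
lemma witt_approx_aux (p : ℕ) [Fact p.Prime] (R : Type*) [CommRing R] [CharP R p]
    [PerfectRing R p] (n : ℕ) (x : WittVector p R) :
    ∃ (a : MonoidAlgebra ℤ R) (z : WittVector p R),
      x = (((MonoidAlgebra.lift ℤ (WittVector p R) R) (WittVector.teichmuller p)).toRingHom a)
        + z * (p : WittVector p R) ^ n := by
  induction n generalizing x with
  | zero => exact ⟨0, x, by simp⟩
  | succ n ih =>
    set t : WittVector p R := teichmuller p (x.coeff 0) with ht
    have hz0 : (x - t).coeff 0 = 0 := by
      have := add_coeff_zero (x - t) t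
      rw [sub_add_cancel] at this
      simpa [ht, teichmuller_coeff_zero] using this
    obtain ⟨y, hy⟩ : ∃ y, verschiebung y = x - t := by
      refine ⟨WittVector.mk p (fun k => (x - t).coeff (k + 1)), WittVector.ext fun k => ?_⟩
      cases k with
      | zero => rw [verschiebung_coeff_zero, hz0]
      | succ k => rw [verschiebung_coeff_succ]; rfl
    obtain ⟨w, rfl⟩ := (frobenius_bijective p R).surjective y
    have hvp : x - t = w * (p : WittVector p R) := by
      rw [← hy, verschiebung_frobenius]
    obtain ⟨a, z, hz⟩ := ih w
    refine ⟨MonoidAlgebra.single (x.coeff 0) 1 + p • a, z, ?_⟩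
    have hsingle :
        (((MonoidAlgebra.lift ℤ (WittVector p R) R) (teichmuller p)).toRingHom)
          (MonoidAlgebra.single (x.coeff 0) (1 : ℤ)) = t := by
      simp [ht, MonoidAlgebra.lift_single]
    rw [map_add, hsingle, map_nsmul]
    have : x = t + w * (p : WittVector p R) := by rw [← hvp]; ring
    rw [this, hz]
    ring

/-- The ring homomorphism `ι : ℤ[R] → W(R)` from the monoid algebra of the multiplicative
monoid `(R, ·)` determined by `ι ([r]) = τ(r)`, the Teichmüller lift. -/
noncomputable def wittIota (p : ℕ) [Fact p.Prime] (R : Type*) [CommRing R] :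
    MonoidAlgebra ℤ R →+* WittVector p R :=
  ((MonoidAlgebra.lift ℤ (WittVector p R) R) (WittVector.teichmuller p)).toRingHom

theorem stmt14 (p : ℕ) [Fact p.Prime]
    (R : Type*) [CommRing R] [CharP R p] [PerfectRing R p]
    (M : Type*) [AddCommGroup M] [IsAdicComplete (Ideal.span {(p : ℤ)}) M]
    (I1 I2 : Module (WittVector p R) M)
    (h : @Module.compHom (WittVector p R) (MonoidAlgebra ℤ R) M _ _ I1 _ (wittIota p R) =
         @Module.compHom (WittVector p R) (MonoidAlgebra ℤ R) M _ _ I2 _ (wittIota p R)) :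
    I1 = I2 := by
  have hι : ∀ (a : MonoidAlgebra ℤ R) (m : M),
      (haveI := I1; wittIota p R a • m) = (haveI := I2; wittIota p R a • m) := by
    intro a m
    exact congrFun (congrFun (congrArg
      (fun (I : Module (MonoidAlgebra ℤ R) M) =>
        I.toDistribMulAction.toMulAction.toSMul.smul) h) a) m
  refine Module.ext' I1 I2 fun w m => ?_
  set d : M := (haveI := I1; w • m) - (haveI := I2; w • m) with hd
  have hhaus : IsHausdorff (Ideal.span {(p : ℤ)}) M := inferInstance
  have hdz : d = 0 := by
    refine hhaus.haus d fun n => ?_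
    rw [SModEq.zero, Ideal.span_singleton_pow, Submodule.ideal_span_singleton_smul]
    obtain ⟨a, z, hz⟩ := witt_approx_aux p R n w
    have e1 : (haveI := I1; w • m) =
        (haveI := I1; wittIota p R a • m) + ((p : ℤ) ^ n) • (haveI := I1; z • m) := by
      letI := I1
      rw [hz, add_smul, mul_comm z, mul_smul]
      congr 1
      have hc : ((p : WittVector p R) ^ n) = (((p : ℤ) ^ n : ℤ) : WittVector p R) := by
        push_cast; ring
      rw [hc, Int.cast_smul_eq_zsmul]
    have e2 : (haveI := I2; w • m) =
        (haveI := I2; wittIota p R a • m) + ((p : ℤ) ^ n) • (haveI := I2; z • m) := by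
      letI := I2
      rw [hz, add_smul, mul_comm z, mul_smul]
      congr 1
      have hc : ((p : WittVector p R) ^ n) = (((p : ℤ) ^ n : ℤ) : WittVector p R) := by
        push_cast; ring
      rw [hc, Int.cast_smul_eq_zsmul]
    have : d = ((p : ℤ) ^ n) • ((haveI := I1; z • m) - (haveI := I2; z • m)) := by
      rw [hd, e1, e2, hι a m, smul_sub]
      abel
    rw [this]
    exact Submodule.smul_mem_pointwise_smul _ _ _ (Submodule.mem_top)
  exact sub_eq_zero.mp hdz
end

section
/- Let p be a prime, let R be a perfect 𝔽_p-algebra, let ε : ℤ[R] → R be the augmentation ring homomorphism with ε([r]) = r, let I = ker ε, and let ι : ℤ[R] → W(R) be the ring homomorphism with ι([r]) = τ(r). Let M be a module over ℤ[R]. Then the following are equivalent: (1) M is p-adically complete (the natural map M → lim M/pⁿM is bijective) and there exists a W(R)-module structure on M whose restriction along ι is the given ℤ[R]-module structure; (2) M is I-adically complete, i.e. the natural map M → lim M/IⁿM is bijective (IsAdicComplete I M). -/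
/-!
The map `ι` identifies `ℤ[R] ⧸ Iⁿ` with `W(R) ⧸ pⁿ`. It is onto modulo `p` (a Witt vector is congruent
to the Teichmüller lift of its zeroth coefficient), hence modulo every `pⁿ`; and `ι⁻¹(pⁿ W(R)) = Iⁿ`,
by induction on `n` from `ι⁻¹(p W(R)) = I`, using that `p` is a non-zero-divisor in `W(R)` and that
`I ⊆ (p) + I²`: every `x` is congruent modulo `p` to `φ(x)ᵖ`, where `φ` is the ring endomorphism of
`ℤ[R]` induced by the inverse of Frobenius on `R`.

So if the action of `ℤ[R]` on `M` extends to `W(R)`, then `Iⁿ M = pⁿ M` for all `n`, and the two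
completeness conditions coincide. Conversely, if `M` is `I`-adically complete, then
`w • x := lim aₙ • x`, for any `aₙ` with `w - ι(aₙ) ∈ pⁿ W(R)`, is a `W(R)`-module structure extending
the given one.
-/

namespace Ideal

variable {A B : Type*} [CommRing A] [CommRing B]

theorem pow_le_pow_sup_pow_succ {I J : Ideal A} (hJI : J ≤ I) (hI : I ≤ J ⊔ I ^ 2) (n : ℕ) :
    I ^ n ≤ J ^ n ⊔ I ^ (n + 1) := by
  induction n with
  | zero => simp
  | succ n ih =>
    calc I ^ (n + 1) = I ^ n * I := pow_succ I n
      _ ≤ (J ^ n ⊔ I ^ (n + 1)) * (J ⊔ I ^ 2) := mul_mono ih hI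
      _ = J ^ (n + 1) ⊔ J ^ n * I ^ 2 ⊔ (I ^ (n + 1) * J ⊔ I ^ (n + 1) * I ^ 2) := by
        rw [sup_mul, mul_sup, mul_sup, ← pow_succ]
      _ ≤ J ^ (n + 1) ⊔ I ^ (n + 2) := by
        have hJn : J ^ n * I ^ 2 ≤ I ^ (n + 2) :=
          (mul_mono_left (pow_right_mono hJI n)).trans_eq (pow_add I n 2).symm
        have hJ : I ^ (n + 1) * J ≤ I ^ (n + 2) :=
          (mul_mono_right hJI).trans_eq (pow_succ I (n + 1)).symm
        have hI2 : I ^ (n + 1) * I ^ 2 ≤ I ^ (n + 2) :=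
          (pow_add I (n + 1) 2).symm.trans_le (pow_le_pow_right (by omega))
        exact sup_le (sup_le_sup_left hJn _) (sup_le hJ hI2 |>.trans le_sup_right)

theorem comap_span_singleton_pow {f : A →+* B} {I : Ideal A} {a : A}
    (hreg : IsRightRegular (f a)) (hcomap : (span {f a}).comap f = I) (hI : I ≤ span {a} ⊔ I ^ 2)
    (n : ℕ) : (span {f a} ^ n).comap f = I ^ n := by
  have ha : a ∈ I := hcomap ▸ mem_comap.2 (mem_span_singleton_self _)
  have hle : ∀ m, I ^ m ≤ (span {f a} ^ m).comap f := fun m => hcomap ▸ le_comap_pow f m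
  refine le_antisymm ?_ (hle n)
  induction n with
  | zero => simp
  | succ n ih =>
    intro x hx
    have hxn : x ∈ I ^ n := ih (pow_le_pow_right n.le_succ hx)
    obtain ⟨c, hc, y, hy, rfl⟩ := Submodule.mem_sup.1 (pow_le_pow_sup_pow_succ
      ((span_singleton_le_iff_mem I).2 ha) hI n hxn)
    obtain ⟨d, rfl⟩ := mem_span_singleton'.1 (span_singleton_pow a n ▸ hc)
    have hfd : f (d * a ^ n) ∈ span {f a} ^ (n + 1) := by
      simpa using sub_mem hx (hle _ hy)
    obtain ⟨w, hw⟩ := mem_span_singleton'.1 (span_singleton_pow (f a) (n + 1) ▸ hfd)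
    have hd : f d = w * f a := hreg.pow n <|
      show f d * f a ^ n = w * f a * f a ^ n by rw [mul_assoc, ← pow_succ', hw, map_mul, map_pow]
    have hdI : d ∈ I := hcomap ▸ mem_span_singleton'.2 ⟨w, hd.symm⟩
    exact add_mem (pow_succ' I n ▸ mul_mem_mul hdI (pow_mem_pow ha n)) hy

theorem exists_sub_mem_span_singleton_pow {f : A →+* B} {a : A}
    (h : ∀ b, ∃ c, b - f c ∈ span {f a}) (n : ℕ) (b : B) : ∃ c, b - f c ∈ span {f a} ^ n := by
  induction n with
  | zero => exact ⟨0, by simp⟩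
  | succ n ih =>
    obtain ⟨c, hc⟩ := ih
    obtain ⟨u, hu⟩ := mem_span_singleton'.1 (span_singleton_pow (f a) n ▸ hc)
    obtain ⟨d, hd⟩ := h u
    obtain ⟨v, hv⟩ := mem_span_singleton'.1 hd
    refine ⟨c + d * a ^ n, span_singleton_pow (f a) (n + 1) ▸ mem_span_singleton'.2 ⟨v, ?_⟩⟩
    rw [map_add, map_mul, map_pow]
    linear_combination hu + (f a) ^ n * hv

end Ideal

theorem isAdicComplete_iff_of_pow_smul_top_eq {A M : Type*} [CommRing A] [AddCommGroup M]
    [Module A M] {I J : Ideal A} (h : ∀ n, (I ^ n • ⊤ : Submodule A M) = J ^ n • ⊤) :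
    IsAdicComplete I M ↔ IsAdicComplete J M := by
  simp only [isAdicComplete_iff, isHausdorff_iff, isPrecomplete_iff, h]

section ExtendScalars

variable {A B M : Type*} [CommRing A] [CommRing B] [AddCommGroup M] [Module A M]
  {f : A →+* B} {I : Ideal A} {J : Ideal B}

theorem pow_smul_top_eq_span_singleton_pow_smul_top [Module B M]
    (hf : ∀ (a : A) (x : M), f a • x = a • x) {a : A} (ha : a ∈ I)
    (hI : I ≤ (Ideal.span {f a}).comap f) (n : ℕ) :
    (I ^ n • ⊤ : Submodule A M) = Ideal.span {a} ^ n • ⊤ := by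
  refine le_antisymm (Submodule.smul_le.2 fun c hc x _ => ?_)
    (Submodule.smul_mono_left (Ideal.pow_right_mono ((Ideal.span_singleton_le_iff_mem I).2 ha) n))
  have hfc : f c ∈ Ideal.span {f a} ^ n := Ideal.le_comap_pow f n (Ideal.pow_right_mono hI n hc)
  obtain ⟨w, hw⟩ := Ideal.mem_span_singleton'.1 (Ideal.span_singleton_pow (f a) n ▸ hfc)
  have hcx : c • x = a ^ n • w • x := by
    rw [← hf, ← hw, mul_comm, mul_smul, ← map_pow, hf]
  exact hcx ▸ Submodule.smul_mem_smul (Ideal.pow_mem_pow (Ideal.mem_span_singleton_self a) n)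
    Submodule.mem_top

theorem smul_sModEq_smul_of_sub_mem (hJ : ∀ n, (J ^ n).comap f ≤ I ^ n) {b : B} {a a' : A} {n : ℕ}
    (ha : b - f a ∈ J ^ n) (ha' : b - f a' ∈ J ^ n) (x : M) :
    a • x ≡ a' • x [SMOD (I ^ n • ⊤ : Submodule A M)] := by
  rw [SModEq.sub_mem, ← sub_smul]
  refine Submodule.smul_mem_smul (hJ n ?_) Submodule.mem_top
  simpa using sub_mem ha' ha

theorem exists_forall_sub_mem_smul_sModEq [IsPrecomplete I M] (hJ : ∀ n, (J ^ n).comap f ≤ I ^ n)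
    (hsurj : ∀ n b, ∃ a, b - f a ∈ J ^ n) (b : B) (x : M) :
    ∃ L : M, ∀ n a, b - f a ∈ J ^ n → a • x ≡ L [SMOD (I ^ n • ⊤ : Submodule A M)] := by
  choose c hc using fun n => hsurj n b
  obtain ⟨L, hL⟩ := IsPrecomplete.prec ‹_› (f := fun n => c n • x) fun {m n} hmn =>
    smul_sModEq_smul_of_sub_mem hJ (hc m) (Ideal.pow_le_pow_right hmn (hc n)) x
  exact ⟨L, fun n a ha => (smul_sModEq_smul_of_sub_mem hJ ha (hc n) x).trans (hL n)⟩

variable [IsAdicComplete I M] (hJ : ∀ n, (J ^ n).comap f ≤ I ^ n)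
  (hsurj : ∀ n b, ∃ a, b - f a ∈ J ^ n)

noncomputable def limSMul (b : B) (x : M) : M :=
  (exists_forall_sub_mem_smul_sModEq hJ hsurj b x).choose

theorem smul_sModEq_limSMul {b : B} {a : A} {n : ℕ} (ha : b - f a ∈ J ^ n) (x : M) :
    a • x ≡ limSMul hJ hsurj b x [SMOD (I ^ n • ⊤ : Submodule A M)] :=
  (exists_forall_sub_mem_smul_sModEq hJ hsurj b x).choose_spec n a ha

theorem limSMul_eq_of_forall (b : B) (x L : M)
    (h : ∀ n a, b - f a ∈ J ^ n → a • x ≡ L [SMOD (I ^ n • ⊤ : Submodule A M)]) :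
    limSMul hJ hsurj b x = L :=
  IsHausdorff.eq_iff_smodEq.2 fun n => by
    obtain ⟨a, ha⟩ := hsurj n b
    exact (smul_sModEq_limSMul hJ hsurj ha x).symm.trans (h n a ha)

theorem limSMul_map (a : A) (x : M) : limSMul hJ hsurj (f a) x = a • x := by
  refine limSMul_eq_of_forall hJ hsurj _ x _ fun n a' ha' => ?_
  exact smul_sModEq_smul_of_sub_mem hJ ha' (by simp) x

theorem limSMul_mul (b b' : B) (x : M) :
    limSMul hJ hsurj (b * b') x = limSMul hJ hsurj b (limSMul hJ hsurj b' x) := by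
  refine limSMul_eq_of_forall hJ hsurj _ x _ fun n a ha => ?_
  obtain ⟨c, hc⟩ := hsurj n b
  obtain ⟨c', hc'⟩ := hsurj n b'
  have hcc' : b * b' - f (c * c') ∈ J ^ n := by
    rw [map_mul, show b * b' - f c * f c' = b * (b' - f c') + (b - f c) * f c' by ring]
    exact add_mem (Ideal.mul_mem_left _ _ hc') (Ideal.mul_mem_right _ _ hc)
  calc a • x ≡ (c * c') • x [SMOD (I ^ n • ⊤ : Submodule A M)] :=
        smul_sModEq_smul_of_sub_mem hJ ha hcc' x
    _ = c • c' • x := mul_smul c c' x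
    _ ≡ c • limSMul hJ hsurj b' x [SMOD (I ^ n • ⊤ : Submodule A M)] :=
        (smul_sModEq_limSMul hJ hsurj hc' x).smul c
    _ ≡ _ [SMOD (I ^ n • ⊤ : Submodule A M)] := smul_sModEq_limSMul hJ hsurj hc _

theorem limSMul_add (b : B) (x y : M) :
    limSMul hJ hsurj b (x + y) = limSMul hJ hsurj b x + limSMul hJ hsurj b y := by
  refine limSMul_eq_of_forall hJ hsurj _ _ _ fun n a ha => ?_
  rw [smul_add]
  exact (smul_sModEq_limSMul hJ hsurj ha x).add (smul_sModEq_limSMul hJ hsurj ha y)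

theorem add_limSMul (b b' : B) (x : M) :
    limSMul hJ hsurj (b + b') x = limSMul hJ hsurj b x + limSMul hJ hsurj b' x := by
  refine limSMul_eq_of_forall hJ hsurj _ x _ fun n a ha => ?_
  obtain ⟨c, hc⟩ := hsurj n b
  obtain ⟨c', hc'⟩ := hsurj n b'
  have hcc' : b + b' - f (c + c') ∈ J ^ n := by
    simpa [map_add, add_sub_add_comm] using add_mem hc hc'
  calc a • x ≡ (c + c') • x [SMOD (I ^ n • ⊤ : Submodule A M)] :=
        smul_sModEq_smul_of_sub_mem hJ ha hcc' x
    _ = c • x + c' • x := add_smul c c' x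
    _ ≡ _ [SMOD (I ^ n • ⊤ : Submodule A M)] :=
        (smul_sModEq_limSMul hJ hsurj hc x).add (smul_sModEq_limSMul hJ hsurj hc' x)

noncomputable abbrev moduleOfIsAdicComplete : Module B M where
  smul := limSMul hJ hsurj
  one_smul x := show limSMul hJ hsurj 1 x = x by rw [← map_one f, limSMul_map, one_smul]
  zero_smul x := show limSMul hJ hsurj 0 x = 0 by rw [← map_zero f, limSMul_map, zero_smul]
  mul_smul := limSMul_mul hJ hsurj
  smul_zero b := limSMul_eq_of_forall hJ hsurj b 0 0 fun n a _ => by rw [smul_zero]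
  smul_add := limSMul_add hJ hsurj
  add_smul := add_limSMul hJ hsurj

end ExtendScalars

namespace MonoidAlgebra

variable {R S : Type*} [Monoid R] [Ring S]

theorem ringHom_ext_int {f g : MonoidAlgebra ℤ R →+* S}
    (h : ∀ r, f (single r 1) = g (single r 1)) : f = g :=
  ringHom_ext' (RingHom.ext_int _ _) (MonoidHom.ext h)

end MonoidAlgebra

open MonoidAlgebra

section Augmentation

variable (R : Type*) [CommRing R]

@[simp]
theorem monoidAlgebraAugmentation_single_one (r : R) :
    monoidAlgebraAugmentation R (single r 1) = r := by
  simp [monoidAlgebraAugmentation]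

theorem monoidAlgebraAugmentation_mapDomainRingHom {F : Type*} [FunLike F R R]
    [RingHomClass F R R] (g : F) (x : MonoidAlgebra ℤ R) :
    monoidAlgebraAugmentation R (mapDomainRingHom ℤ (g : R →* R) x) =
      g (monoidAlgebraAugmentation R x) :=
  congr($(ringHom_ext_int (f := (monoidAlgebraAugmentation R).comp (mapDomainRingHom ℤ g))
    (g := (g : R →+* R).comp (monoidAlgebraAugmentation R)) fun r => by simp) x)

theorem natCast_mem_ker_monoidAlgebraAugmentation (p : ℕ) [CharP R p] :
    (p : MonoidAlgebra ℤ R) ∈ RingHom.ker (monoidAlgebraAugmentation R) := by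
  simp [RingHom.mem_ker]

variable (p : ℕ) [Fact p.Prime] [CharP R p]

theorem natCast_mem_nonunits_monoidAlgebra : (p : MonoidAlgebra ℤ R) ∈ nonunits _ := fun h => by
  have := CharP.nontrivial_of_char_ne_one (R := R) (Fact.out : p.Prime).ne_one
  simpa using h.map (monoidAlgebraAugmentation R)

variable [PerfectRing R p]

theorem mapDomainRingHom_frobeniusEquiv_symm_pow_sub_mem (x : MonoidAlgebra ℤ R) :
    mapDomainRingHom ℤ ((frobeniusEquiv R p).symm : R →* R) x ^ p - x ∈
      Ideal.span {(p : MonoidAlgebra ℤ R)} := by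
  let Q := MonoidAlgebra ℤ R ⧸ Ideal.span {(p : MonoidAlgebra ℤ R)}
  have := CharP.quotient (MonoidAlgebra ℤ R) p (natCast_mem_nonunits_monoidAlgebra R p)
  have hfrob : ((frobenius Q p).comp (Ideal.Quotient.mk _)).comp
      (mapDomainRingHom ℤ ((frobeniusEquiv R p).symm : R →* R)) = Ideal.Quotient.mk _ :=
    ringHom_ext_int fun r => by
      simp [frobenius_def, ← map_pow, frobeniusEquiv_symm_pow]
  rw [← Ideal.Quotient.eq, map_pow]
  exact congr($hfrob x)

theorem ker_monoidAlgebraAugmentation_le :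
    RingHom.ker (monoidAlgebraAugmentation R) ≤
      Ideal.span {(p : MonoidAlgebra ℤ R)} ⊔ RingHom.ker (monoidAlgebraAugmentation R) ^ 2 := by
  intro x hx
  set y := mapDomainRingHom ℤ ((frobeniusEquiv R p).symm : R →* R) x
  have hy : y ∈ RingHom.ker (monoidAlgebraAugmentation R) := by
    rw [RingHom.mem_ker] at hx ⊢
    rw [monoidAlgebraAugmentation_mapDomainRingHom, hx, map_zero]
  have hyp : y ^ p ∈ RingHom.ker (monoidAlgebraAugmentation R) ^ 2 :=
    Ideal.pow_le_pow_right (Fact.out : p.Prime).two_le (Ideal.pow_mem_pow hy p)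
  rw [show x = -(y ^ p - x) + y ^ p by ring]
  exact Submodule.add_mem_sup
    (neg_mem (mapDomainRingHom_frobeniusEquiv_symm_pow_sub_mem R p x)) hyp

end Augmentation

section Witt

variable (p : ℕ) [Fact p.Prime] (R : Type*) [CommRing R]

@[simp]
theorem wittIota_single_one (r : R) : wittIota p R (single r 1) = WittVector.teichmuller p r := by
  simp [wittIota]

theorem constantCoeff_comp_wittIota :
    WittVector.constantCoeff.comp (wittIota p R) = monoidAlgebraAugmentation R :=
  ringHom_ext_int fun r => by simp [WittVector.teichmuller_coeff_zero]

variable [CharP R p] [PerfectRing R p]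

theorem comap_wittIota_span_p :
    (Ideal.span {(p : WittVector p R)}).comap (wittIota p R) =
      RingHom.ker (monoidAlgebraAugmentation R) := by
  rw [← WittVector.ker_constantCoeff, RingHom.comap_ker, constantCoeff_comp_wittIota]

theorem exists_sub_wittIota_mem_span_p (w : WittVector p R) :
    ∃ a, w - wittIota p R a ∈ Ideal.span {(p : WittVector p R)} :=
  ⟨single (w.coeff 0) 1, by
    rw [← WittVector.ker_constantCoeff, RingHom.mem_ker, map_sub, wittIota_single_one, sub_eq_zero]
    exact (WittVector.teichmuller_coeff_zero p _).symm⟩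

theorem WittVector.isRightRegular_p : IsRightRegular (p : WittVector p R) := fun x y h =>
  sub_eq_zero.1 <| WittVector.eq_zero_of_p_mul_eq_zero _ <| by
    rw [sub_mul]; exact sub_eq_zero.2 h

theorem comap_wittIota_span_p_pow (n : ℕ) :
    (Ideal.span {(p : WittVector p R)} ^ n).comap (wittIota p R) =
      RingHom.ker (monoidAlgebraAugmentation R) ^ n := by
  have := Ideal.comap_span_singleton_pow (f := wittIota p R) (a := p)
    (by rw [map_natCast]; exact WittVector.isRightRegular_p p R)
    (by rw [map_natCast]; exact comap_wittIota_span_p p R) (ker_monoidAlgebraAugmentation_le R p) n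
  rwa [map_natCast] at this

theorem exists_sub_wittIota_mem_span_p_pow (n : ℕ) (w : WittVector p R) :
    ∃ a, w - wittIota p R a ∈ Ideal.span {(p : WittVector p R)} ^ n := by
  have := Ideal.exists_sub_mem_span_singleton_pow (f := wittIota p R) (a := p)
    (by rw [map_natCast]; exact exists_sub_wittIota_mem_span_p p R) n w
  rwa [map_natCast] at this

end Witt

theorem stmt16 (p : ℕ) [Fact p.Prime]
    (R : Type*) [CommRing R] [CharP R p] [PerfectRing R p]
    (M : Type*) [AddCommGroup M] [instM : Module (MonoidAlgebra ℤ R) M] :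
    (IsAdicComplete (Ideal.span {(p : MonoidAlgebra ℤ R)}) M ∧
        ∃ I : Module (WittVector p R) M,
          @Module.compHom (WittVector p R) (MonoidAlgebra ℤ R) M _ _ I _ (wittIota p R) =
            instM) ↔
      IsAdicComplete (RingHom.ker (monoidAlgebraAugmentation R)) M := by
  have hfilt [Module (WittVector p R) M] (hW : ∀ a (x : M), wittIota p R a • x = a • x) :=
    pow_smul_top_eq_span_singleton_pow_smul_top hW
      (natCast_mem_ker_monoidAlgebraAugmentation R p)
      (by rw [map_natCast, comap_wittIota_span_p])
  constructor
  · rintro ⟨hp, W, hW⟩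
    have hcompat : ∀ a (x : M), wittIota p R a • x = a • x := fun a x => by subst hW; rfl
    exact (isAdicComplete_iff_of_pow_smul_top_eq (hfilt hcompat)).2 hp
  · intro hI
    let W := moduleOfIsAdicComplete (M := M) (fun n => (comap_wittIota_span_p_pow p R n).le)
      (exists_sub_wittIota_mem_span_p_pow p R)
    have hW : ∀ a (x : M), wittIota p R a • x = a • x := limSMul_map _ _
    exact ⟨(isAdicComplete_iff_of_pow_smul_top_eq (hfilt hW)).1 hI, W,
      Module.ext' _ _ hW⟩
end
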